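/- arXiv:1909.11278 — 9 statements merged into one kernel-verified Lean document; each statement's English description precedes it below -/
import Mathlib

section
/- Let A be a unital Banach algebra, G a group, w : G → A a group homomorphism into the invertible isometries of A, and τ : A → ℂ a continuous unital trace, such that: (i) the span of {w(g) : g ∈ G} is dense in A, (ii) τ(w(g)) = 0 for all g ≠ 1, and (iii) if a ∈ A satisfies τ(a·w(g)) = 0 for all g ∈ G then a = 0. Suppose further that for every finite set S ⊆ G∖{1} and every ε > 0 there exist n ∈ ℕ and h₁,…,hₙ ∈ G such that ‖(1/n)∑ⱼ w(hⱼ g hⱼ⁻¹)‖ < ε for all g ∈ S. Then A is simple (every nonzero two-sided ideal of A equals A). -/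
/-!
Averaging over conjugates, `Φ a = (1/n) ∑ⱼ w(hⱼ) a w(hⱼ)⁻¹`, maps every two-sided ideal into
itself, fixes `1` and does not increase norms, because the `w(hⱼ)` are invertible isometries.
By faithfulness of `τ`, a nonzero ideal contains some `a` with `τ a = 1`. Approximate `a` by a
finite combination `b = ∑ c_g w(g)`; then `b = τ(b) • 1 + b'` with `b'` a combination of the
`w(g)`, `g ≠ 1`, and the Powers property gives an averaging `Φ` making `Φ b'` as small as we
like. Hence `Φ a` is within distance `1` of `1`, so the ideal contains a unit.
-/

theorem TwoSidedIdeal.eq_top_of_norm_lt_one {R : Type*} [NormedRing R] [HasSummableGeomSeries R]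
    (I : TwoSidedIdeal R) {x : R} (hxI : x ∈ I) (hx : ‖1 - x‖ < 1) : I = ⊤ :=
  I.eq_top <| by
    simpa using (Ideal.eq_top_iff_one _).1 (I.asIdeal.eq_top_of_norm_lt_one (mem_asIdeal.2 hxI) hx)

theorem TwoSidedIdeal.smul_of_tower_mem {S R : Type*} [Ring R] [SMul S R] [IsScalarTower S R R]
    (I : TwoSidedIdeal R) (r : S) {x : R} (hx : x ∈ I) : r • x ∈ I :=
  mem_asIdeal.1 (I.asIdeal.smul_of_tower_mem r (mem_asIdeal.2 hx))

theorem TwoSidedIdeal.exists_mem_eq_one_of_ne_bot {𝕜 R ι : Type*} [Field 𝕜] [Ring R] [Algebra 𝕜 R]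
    (τ : R →ₗ[𝕜] 𝕜) (u : ι → R) (hτ : ∀ a, (∀ i, τ (a * u i) = 0) → a = 0)
    {I : TwoSidedIdeal R} (hI : I ≠ ⊥) : ∃ a ∈ I, τ a = 1 := by
  obtain ⟨a, haI, ha⟩ : ∃ a ∈ I, a ≠ 0 := by
    by_contra! h
    exact hI (eq_bot_iff.2 fun x hx => (mem_bot R).2 (h x hx))
  obtain ⟨i, hi⟩ : ∃ i, τ (a * u i) ≠ 0 := by
    by_contra! h
    exact ha (hτ a h)
  refine ⟨(τ (a * u i))⁻¹ • (a * u i), I.smul_of_tower_mem _ (I.mul_mem_right _ _ haI), ?_⟩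
  rw [map_smul, smul_eq_mul, inv_mul_cancel₀ hi]

theorem map_finsuppSum_smul_eq_zero {ι R M N F : Type*} [Semiring R] [AddCommMonoid M]
    [AddCommMonoid N] [Module R M] [Module R N] [FunLike F M N] [LinearMapClass F R M N]
    (f : F) (c : ι →₀ R) (v : ι → M) (hv : ∀ i ∈ c.support, f (v i) = 0) :
    f (c.sum fun i r => r • v i) = 0 := by
  rw [map_finsuppSum]
  exact Finset.sum_eq_zero fun i hi => by dsimp only; rw [map_smul, hv i hi, smul_zero]

theorem norm_finsuppSum_smul_le {ι 𝕜 E : Type*} [NormedField 𝕜] [SeminormedAddCommGroup E]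
    [NormedSpace 𝕜 E] (c : ι →₀ 𝕜) (v : ι → E) {ε : ℝ} (hv : ∀ i ∈ c.support, ‖v i‖ ≤ ε) :
    ‖c.sum fun i r => r • v i‖ ≤ (c.sum fun _ r => ‖r‖) * ε := by
  refine (norm_sum_le _ _).trans ?_
  rw [Finsupp.sum, Finset.sum_mul]
  exact Finset.sum_le_sum fun i hi => by
    rw [norm_smul]; exact mul_le_mul_of_nonneg_left (hv i hi) (norm_nonneg _)

section conjAvg

variable {A : Type*} [NormedRing A] [NormedAlgebra ℂ A] {n : ℕ}

noncomputable def conjAvg (u : Fin n → Aˣ) : A →ₗ[ℂ] A where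
  toFun a := (n : ℝ)⁻¹ • ∑ j, (u j : A) * a * ↑(u j)⁻¹
  map_add' a b := by simp only [mul_add, add_mul, Finset.sum_add_distrib, smul_add]
  map_smul' c a := by
    simp only [mul_smul_comm, smul_mul_assoc, ← Finset.smul_sum, RingHom.id_apply]
    exact smul_comm _ _ _

theorem conjAvg_apply (u : Fin n → Aˣ) (a : A) :
    conjAvg u a = (n : ℝ)⁻¹ • ∑ j, (u j : A) * a * ↑(u j)⁻¹ := rfl

theorem conjAvg_one (u : Fin n → Aˣ) (hn : 0 < n) : conjAvg u 1 = 1 := by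
  simp only [conjAvg_apply, mul_one, Units.mul_inv, Finset.sum_const, Finset.card_univ,
    Fintype.card_fin, ← Nat.cast_smul_eq_nsmul ℝ, smul_smul]
  rw [inv_mul_cancel₀ (by positivity), one_smul]

theorem norm_conjAvg_le {u : Fin n → Aˣ} (hu : ∀ j, ‖(u j : A)‖ ≤ 1)
    (hu' : ∀ j, ‖(↑(u j)⁻¹ : A)‖ ≤ 1) (a : A) : ‖conjAvg u a‖ ≤ ‖a‖ := by
  have hterm (j : Fin n) : ‖(u j : A) * a * ↑(u j)⁻¹‖ ≤ ‖a‖ :=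
    calc ‖(u j : A) * a * ↑(u j)⁻¹‖ ≤ ‖(u j : A)‖ * ‖a‖ * ‖(↑(u j)⁻¹ : A)‖ := norm_mul₃_le
      _ ≤ 1 * ‖a‖ * 1 := by gcongr; exacts [hu j, hu' j]
      _ = ‖a‖ := by ring
  calc ‖conjAvg u a‖ ≤ (n : ℝ)⁻¹ * (n * ‖a‖) := by
        rw [conjAvg_apply, norm_smul, norm_inv, Real.norm_natCast]
        gcongr
        simpa using norm_sum_le_of_le Finset.univ fun j _ => hterm j
    _ ≤ ‖a‖ := by
        rw [← mul_assoc]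
        exact mul_le_of_le_one_left (norm_nonneg a) (inv_mul_le_one_of_le₀ le_rfl (by positivity))

theorem TwoSidedIdeal.conjAvg_mem (I : TwoSidedIdeal A) (u : Fin n → Aˣ) {a : A} (ha : a ∈ I) :
    conjAvg u a ∈ I :=
  I.smul_of_tower_mem _ <| sum_mem fun _ _ => I.mul_mem_right _ _ (I.mul_mem_left _ _ ha)

theorem conjAvg_apply_map {G : Type*} [Group G] (w : G →* Aˣ) (h : Fin n → G) (g : G) :
    conjAvg (fun j => w (h j)) (w g) = (n : ℝ)⁻¹ • ∑ j, (w (h j * g * (h j)⁻¹) : A) := by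
  simp only [conjAvg_apply, map_mul, map_inv, Units.val_mul]

end conjAvg

theorem norm_sub_smul_one_le {A : Type*} [NormedRing A] [NormOneClass A] [NormedAlgebra ℂ A]
    (Φ : A →ₗ[ℂ] A) (hΦ : ∀ x, ‖Φ x‖ ≤ ‖x‖) (τ : A →L[ℂ] ℂ) (a b : A) :
    ‖Φ a - τ a • 1‖ ≤ (1 + ‖τ‖) * ‖a - b‖ + ‖Φ b - τ b • 1‖ := by
  have hsplit : Φ a - τ a • 1 = Φ (a - b) - τ (a - b) • (1 : A) + (Φ b - τ b • 1) := by
    rw [map_sub, map_sub, sub_smul]; abel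
  calc ‖Φ a - τ a • 1‖ ≤ ‖Φ (a - b)‖ + ‖τ (a - b) • (1 : A)‖ + ‖Φ b - τ b • 1‖ := by
        rw [hsplit]; exact norm_add_le_of_le (norm_sub_le _ _) le_rfl
    _ ≤ ‖a - b‖ + ‖τ‖ * ‖a - b‖ + ‖Φ b - τ b • 1‖ := by
        rw [norm_smul, norm_one, mul_one]; gcongr; exacts [hΦ _, τ.le_opNorm _]
    _ = (1 + ‖τ‖) * ‖a - b‖ + ‖Φ b - τ b • 1‖ := by ring

theorem exists_norm_one_sub_conjAvg_lt_one {A : Type*} [NormedRing A] [NormOneClass A]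
    [NormedAlgebra ℂ A] {G : Type*} [Group G] (w : G →* Aˣ)
    (hw : ∀ g : G, ‖((w g : Aˣ) : A)‖ ≤ 1) (hw' : ∀ g : G, ‖(((w g)⁻¹ : Aˣ) : A)‖ ≤ 1)
    (τ : A →L[ℂ] ℂ) (hτ1 : τ 1 = 1)
    (hdense :
      Dense ((Submodule.span ℂ (Set.range fun g : G => ((w g : Aˣ) : A)) : Submodule ℂ A) : Set A))
    (hτw : ∀ g : G, g ≠ 1 → τ ((w g : Aˣ) : A) = 0)
    (hPowers : ∀ S : Finset G, (1 : G) ∉ S → ∀ ε : ℝ, 0 < ε →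
      ∃ (n : ℕ) (h : Fin n → G), 0 < n ∧ ∀ g ∈ S,
        ‖(n : ℝ)⁻¹ • ∑ j : Fin n, ((w (h j * g * (h j)⁻¹) : Aˣ) : A)‖ < ε)
    {a : A} (hτa : τ a = 1) :
    ∃ (n : ℕ) (h : Fin n → G), ‖1 - conjAvg (fun j => w (h j)) a‖ < 1 := by
  obtain ⟨b, hb, hab⟩ := Metric.mem_closure_iff.1 (hdense a) (2 * (1 + ‖τ‖))⁻¹ (by positivity)
  obtain ⟨c, hc⟩ := Finsupp.mem_span_range_iff_exists_finsupp.1 hb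
  set b' := (c.erase 1).sum fun g r => r • (w g : A)
  set M := (c.erase 1).sum fun _ r => ‖r‖
  have hM : 0 ≤ M := Finset.sum_nonneg fun _ _ => norm_nonneg _
  obtain ⟨n, h, hn, hh⟩ := hPowers (c.erase 1).support (by simp) (2 * (M + 1))⁻¹ (by positivity)
  set Φ := conjAvg fun j => w (h j)
  have hbc : b = c 1 • 1 + b' := by
    rw [← hc, ← Finsupp.add_sum_erase' c 1 (fun g r => r • (w g : A)) fun _ => zero_smul ℂ _,
      map_one w, Units.val_one]
  have hτb' : τ b' = 0 := map_finsuppSum_smul_eq_zero τ _ _ fun g hg =>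
    hτw g (by rintro rfl; simp at hg)
  have hΦb' : ‖Φ b'‖ ≤ M * (2 * (M + 1))⁻¹ := by
    rw [map_finsuppSum]
    simp only [map_smul]
    exact norm_finsuppSum_smul_le _ _ fun g hg => by
      simpa only [Φ, conjAvg_apply_map] using (hh g hg).le
  have hΦb : Φ b - τ b • 1 = Φ b' := by
    rw [hbc, map_add, map_add, hτb', map_smul, map_smul, hτ1, conjAvg_one _ hn]
    simp
  refine ⟨n, h, ?_⟩
  calc ‖1 - Φ a‖ = ‖Φ a - τ a • 1‖ := by rw [hτa, one_smul, norm_sub_rev]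
    _ ≤ (1 + ‖τ‖) * ‖a - b‖ + ‖Φ b'‖ := by
        rw [← hΦb]
        exact norm_sub_smul_one_le Φ (norm_conjAvg_le (fun _ => hw _) fun _ => hw' _) τ _ _
    _ < 1 := by
        rw [← dist_eq_norm]
        have hτ : (1 + ‖τ‖) * dist a b < 1 / 2 :=
          calc _ < (1 + ‖τ‖) * (2 * (1 + ‖τ‖))⁻¹ := by gcongr
            _ = 1 / 2 := by field_simp
        have hM' : M * (2 * (M + 1))⁻¹ < 1 / 2 := by
          rw [← div_eq_mul_inv, div_lt_iff₀ (by positivity)]; linarith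
        linarith

theorem powers_property_implies_simple_general
    {A : Type*} [NormedRing A] [NormOneClass A] [NormedAlgebra ℂ A] [CompleteSpace A]
    {G : Type*} [Group G] (w : G →* Aˣ)
    (hw : ∀ g : G, ‖((w g : Aˣ) : A)‖ = 1)
    (hw' : ∀ g : G, ‖(((w g)⁻¹ : Aˣ) : A)‖ = 1)
    (τ : A →L[ℂ] ℂ) (hτ1 : τ 1 = 1)
    (hdense :
      Dense ((Submodule.span ℂ (Set.range fun g : G => ((w g : Aˣ) : A)) : Submodule ℂ A) : Set A))
    (hτw : ∀ g : G, g ≠ 1 → τ ((w g : Aˣ) : A) = 0)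
    (hfaith : ∀ a : A, (∀ g : G, τ (a * ((w g : Aˣ) : A)) = 0) → a = 0)
    (hPowers : ∀ S : Finset G, (1 : G) ∉ S → ∀ ε : ℝ, 0 < ε →
      ∃ (n : ℕ) (h : Fin n → G), 0 < n ∧ ∀ g ∈ S,
        ‖(n : ℝ)⁻¹ • ∑ j : Fin n, ((w (h j * g * (h j)⁻¹) : Aˣ) : A)‖ < ε) :
    ∀ I : TwoSidedIdeal A, I ≠ ⊥ → I = ⊤ := by
  intro I hI
  obtain ⟨a, haI, hτa⟩ := I.exists_mem_eq_one_of_ne_bot (τ : A →ₗ[ℂ] ℂ) _ hfaith hI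
  obtain ⟨n, h, hlt⟩ := exists_norm_one_sub_conjAvg_lt_one w (fun g => (hw g).le)
    (fun g => (hw' g).le) τ hτ1 hdense hτw hPowers hτa
  exact I.eq_top_of_norm_lt_one (I.conjAvg_mem _ haI) hlt

/-- A reduced group Banach algebra with the Powers property is simple. -/
theorem powers_property_implies_simple
    {A : Type*} [NormedRing A] [NormOneClass A] [NormedAlgebra ℂ A] [CompleteSpace A]
    {G : Type*} [Group G] (w : G →* Aˣ)
    (hw : ∀ g : G, ‖((w g : Aˣ) : A)‖ = 1)
    (hw' : ∀ g : G, ‖(((w g)⁻¹ : Aˣ) : A)‖ = 1)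
    (τ : A →L[ℂ] ℂ) (hτ1 : τ 1 = 1)
    (hτtr : ∀ a b : A, τ (a * b) = τ (b * a))
    (hdense :
      Dense ((Submodule.span ℂ (Set.range fun g : G => ((w g : Aˣ) : A)) : Submodule ℂ A) : Set A))
    (hτw : ∀ g : G, g ≠ 1 → τ ((w g : Aˣ) : A) = 0)
    (hfaith : ∀ a : A, (∀ g : G, τ (a * ((w g : Aˣ) : A)) = 0) → a = 0)
    (hPowers : ∀ S : Finset G, (1 : G) ∉ S → ∀ ε : ℝ, 0 < ε →
      ∃ (n : ℕ) (h : Fin n → G), 0 < n ∧ ∀ g ∈ S,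
        ‖(n : ℝ)⁻¹ • ∑ j : Fin n, ((w (h j * g * (h j)⁻¹) : Aˣ) : A)‖ < ε) :
    ∀ I : TwoSidedIdeal A, I ≠ ⊥ → I = ⊤ :=
  powers_property_implies_simple_general w hw hw' τ hτ1 hdense hτw hfaith hPowers
end

section
/- Let A be a unital Banach algebra, G a group, w : G → A a group homomorphism into the invertible isometries of A, and let g ∈ G. Suppose that for every ε > 0 there exist n ∈ ℕ and h₁,…,hₙ ∈ G such that ‖(1/n)∑ⱼ w(hⱼ g hⱼ⁻¹)‖ < ε. Then for every continuous linear functional σ : A → ℂ with σ(ab) = σ(ba) for all a,b ∈ A, we have σ(w(g)) = 0. -/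
/-! A trace is invariant under conjugation, so it takes the value `σ (w g)` on every average
of conjugates of `w g`. The g-Powers property makes these averages arbitrarily small, and the
fiber of the continuous map `σ` over `σ (w g)` is closed, so it contains `0`. -/

theorem apply_units_conj_of_trace {R β : Type*} [Monoid R] (σ : R → β)
    (htr : ∀ a b : R, σ (a * b) = σ (b * a)) (u : Rˣ) (a : R) :
    σ (u * a * ↑u⁻¹) = σ a := by
  rw [htr, ← mul_assoc, Units.inv_mul, one_mul]

theorem LinearMap.apply_average_of_forall_apply_eq {E : Type*} [AddCommGroup E] [Module ℝ E]
    [Module ℂ E] [IsScalarTower ℝ ℂ E] (σ : E →ₗ[ℂ] ℂ) {n : ℕ} (hn : 0 < n) (x : Fin n → E)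
    {c : ℂ} (hx : ∀ j, σ (x j) = c) : σ ((n : ℝ)⁻¹ • ∑ j, x j) = c := by
  rw [σ.map_smul_of_tower, map_sum, Finset.sum_congr rfl fun j _ => hx j, Finset.sum_const,
    Finset.card_univ, Fintype.card_fin, nsmul_eq_mul, Complex.real_smul]
  push_cast
  field_simp [hn.ne']

theorem ContinuousLinearMap.eq_zero_of_forall_exists_apply_eq_norm_lt {𝕜 E F : Type*}
    [NormedField 𝕜] [SeminormedAddCommGroup E] [NormedSpace 𝕜 E] [NormedAddCommGroup F]
    [NormedSpace 𝕜 F] (σ : E →L[𝕜] F) {c : F} (h : ∀ ε > 0, ∃ x, σ x = c ∧ ‖x‖ < ε) :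
    c = 0 := by
  have h0 : (0 : E) ∈ closure (σ ⁻¹' {c}) :=
    Metric.mem_closure_iff.2 fun ε hε => by
      obtain ⟨x, hx, hxε⟩ := h ε hε
      exact ⟨x, hx, by rwa [dist_zero_left]⟩
  rw [(isClosed_singleton.preimage σ.continuous).closure_eq] at h0
  simpa using h0.symm

theorem gPowers_trace_vanishes_general
    {A : Type*} [NormedRing A] [NormedAlgebra ℂ A]
    {G : Type*} [Group G] (w : G →* Aˣ)
    (g : G)
    (hPowers : ∀ ε : ℝ, 0 < ε →
      ∃ (n : ℕ) (h : Fin n → G), 0 < n ∧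
        ‖(n : ℝ)⁻¹ • ∑ j : Fin n, ((w (h j * g * (h j)⁻¹) : Aˣ) : A)‖ < ε) :
    ∀ σ : A →L[ℂ] ℂ, (∀ a b : A, σ (a * b) = σ (b * a)) → σ ((w g : Aˣ) : A) = 0 := by
  intro σ htr
  have hconj (k : G) : σ (w (k * g * k⁻¹)) = σ (w g) := by
    simpa only [map_mul, map_inv, Units.val_mul] using apply_units_conj_of_trace σ htr (w k) (w g)
  refine σ.eq_zero_of_forall_exists_apply_eq_norm_lt fun ε hε => ?_
  obtain ⟨n, h, hn, hsmall⟩ := hPowers ε hε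
  exact ⟨_, σ.toLinearMap.apply_average_of_forall_apply_eq hn _ fun j => hconj (h j), hsmall⟩

/-- if `g` has the g-Powers property, then every continuous tracial
linear functional vanishes on `w g`. -/
theorem gPowers_trace_vanishes
    {A : Type*} [NormedRing A] [NormOneClass A] [NormedAlgebra ℂ A] [CompleteSpace A]
    {G : Type*} [Group G] (w : G →* Aˣ)
    (hw : ∀ k : G, ‖((w k : Aˣ) : A)‖ = 1)
    (hw' : ∀ k : G, ‖(((w k)⁻¹ : Aˣ) : A)‖ = 1)
    (g : G)
    (hPowers : ∀ ε : ℝ, 0 < ε →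
      ∃ (n : ℕ) (h : Fin n → G), 0 < n ∧
        ‖(n : ℝ)⁻¹ • ∑ j : Fin n, ((w (h j * g * (h j)⁻¹) : Aˣ) : A)‖ < ε) :
    ∀ σ : A →L[ℂ] ℂ, (∀ a b : A, σ (a * b) = σ (b * a)) → σ ((w g : Aˣ) : A) = 0 :=
  gPowers_trace_vanishes_general w g hPowers
end

section
/- Let G be a group, let A be a unital Banach algebra, w : G → A a homomorphism into the invertible isometries, and τ a continuous unital trace with τ(w(g)) = 0 for g ≠ 1 and the span of {w(g)} dense in A. Suppose the g-Powers property holds for every g ∈ G∖{1}: for every ε > 0 there exist n and h₁,…,hₙ with ‖(1/n)∑ⱼ w(hⱼ g hⱼ⁻¹)‖ < ε. Then every continuous linear functional σ on A satisfying σ(ab) = σ(ba) for all a,b equals σ(1)·τ; in particular τ is the unique unital trace on A. -/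
/-!
A tracial functional `σ` is invariant under conjugation by units, so it takes the same value on
`w g` as on every average of conjugates of `w g`. The g-Powers property makes such averages
arbitrarily small, hence by continuity `σ (w g) = 0` for `g ≠ 1`. Thus `σ` and `σ 1 • τ` agree on
every `w g`, and density of their span forces `σ = σ 1 • τ`.
-/

theorem Units.apply_conj_of_trace {R M : Type*} [Monoid R] {f : R → M}
    (hf : ∀ a b : R, f (a * b) = f (b * a)) (u : Rˣ) (a : R) :
    f (↑u * a * ↑u⁻¹) = f a := by
  rw [hf, ← mul_assoc, Units.inv_mul, one_mul]

theorem Continuous.apply_zero_eq_of_forall_exists_norm_lt {E F : Type*}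
    [SeminormedAddCommGroup E] [TopologicalSpace F] [T1Space F] {f : E → F} (hf : Continuous f)
    {c : F} (h : ∀ ε > 0, ∃ x, ‖x‖ < ε ∧ f x = c) : f 0 = c := by
  have hzero : (0 : E) ∈ closure (f ⁻¹' {c}) := by
    refine Metric.mem_closure_iff.2 fun ε hε => ?_
    obtain ⟨x, hx, hfx⟩ := h ε hε
    exact ⟨x, hfx, by rwa [dist_zero_left]⟩
  rw [(isClosed_singleton.preimage hf).closure_eq] at hzero
  exact hzero

def PowersProperty {A G : Type*} [NormedRing A] [NormedAlgebra ℂ A] [Group G] (w : G →* Aˣ)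
    (g : G) : Prop :=
  ∀ ε : ℝ, 0 < ε → ∃ (n : ℕ) (h : Fin n → G), 0 < n ∧
    ‖(n : ℝ)⁻¹ • ∑ j : Fin n, ((w (h j * g * (h j)⁻¹) : Aˣ) : A)‖ < ε

theorem PowersProperty.apply_eq_zero_of_trace {A G E : Type*} [NormedRing A] [NormedAlgebra ℂ A]
    [Group G] [NormedAddCommGroup E] [NormedSpace ℂ E] {w : G →* Aˣ} {g : G}
    (hg : PowersProperty w g) (σ : A →L[ℂ] E) (hσ : ∀ a b : A, σ (a * b) = σ (b * a)) :
    σ ((w g : Aˣ) : A) = 0 := by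
  have hconj (k : G) : σ ((w (k * g * k⁻¹) : Aˣ) : A) = σ ((w g : Aˣ) : A) := by
    simpa [map_mul] using Units.apply_conj_of_trace hσ (w k) (w g : A)
  rw [← map_zero σ]
  refine (σ.continuous.apply_zero_eq_of_forall_exists_norm_lt fun ε hε => ?_).symm
  obtain ⟨n, h, hn, hsmall⟩ := hg ε hε
  refine ⟨_, hsmall, ?_⟩
  rw [σ.map_smul_of_tower, map_sum, Finset.sum_congr rfl fun j _ => hconj (h j),
    Finset.sum_const, Finset.card_univ, Fintype.card_fin, ← Nat.cast_smul_eq_nsmul ℝ,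
    inv_smul_smul₀ (Nat.cast_ne_zero.2 hn.ne')]

theorem gPowers_unique_trace_general
    {A : Type*} [NormedRing A] [NormedAlgebra ℂ A]
    {G : Type*} [Group G] (w : G →* Aˣ)
    (τ : A →L[ℂ] ℂ) (hτ1 : τ 1 = 1)
    (hτw : ∀ g : G, g ≠ 1 → τ ((w g : Aˣ) : A) = 0)
    (hdense :
      Dense ((Submodule.span ℂ (Set.range fun g : G => ((w g : Aˣ) : A)) : Submodule ℂ A) : Set A))
    (hPowers : ∀ g : G, g ≠ 1 → ∀ ε : ℝ, 0 < ε →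
      ∃ (n : ℕ) (h : Fin n → G), 0 < n ∧
        ‖(n : ℝ)⁻¹ • ∑ j : Fin n, ((w (h j * g * (h j)⁻¹) : Aˣ) : A)‖ < ε) :
    (∀ σ : A →L[ℂ] ℂ, (∀ a b : A, σ (a * b) = σ (b * a)) → σ = σ 1 • τ) ∧
      (∀ σ : A →L[ℂ] ℂ, (∀ a b : A, σ (a * b) = σ (b * a)) → σ 1 = 1 → σ = τ) := by
  have hσ_eq (σ : A →L[ℂ] ℂ) (hσ : ∀ a b : A, σ (a * b) = σ (b * a)) : σ = σ 1 • τ := by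
    refine ContinuousLinearMap.ext_on hdense ?_
    rintro _ ⟨g, rfl⟩
    rcases eq_or_ne g 1 with rfl | hg
    · simp [hτ1]
    · simp [PowersProperty.apply_eq_zero_of_trace (hPowers g hg) σ hσ, hτw g hg]
  refine ⟨hσ_eq, fun σ hσ hσ1 => ?_⟩
  rw [hσ_eq σ hσ, hσ1, one_smul]

/-- if the g-Powers property holds for every `g ≠ 1`, then every continuous
tracial linear functional `σ` equals `σ(1) • τ`; in particular `τ` is the unique
unital trace. -/
theorem gPowers_unique_trace
    {A : Type*} [NormedRing A] [NormOneClass A] [NormedAlgebra ℂ A] [CompleteSpace A]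
    {G : Type*} [Group G] (w : G →* Aˣ)
    (hw : ∀ k : G, ‖((w k : Aˣ) : A)‖ = 1)
    (hw' : ∀ k : G, ‖(((w k)⁻¹ : Aˣ) : A)‖ = 1)
    (τ : A →L[ℂ] ℂ) (hτ1 : τ 1 = 1)
    (hτtr : ∀ a b : A, τ (a * b) = τ (b * a))
    (hτw : ∀ g : G, g ≠ 1 → τ ((w g : Aˣ) : A) = 0)
    (hdense :
      Dense ((Submodule.span ℂ (Set.range fun g : G => ((w g : Aˣ) : A)) : Submodule ℂ A) : Set A))
    (hPowers : ∀ g : G, g ≠ 1 → ∀ ε : ℝ, 0 < ε →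
      ∃ (n : ℕ) (h : Fin n → G), 0 < n ∧
        ‖(n : ℝ)⁻¹ • ∑ j : Fin n, ((w (h j * g * (h j)⁻¹) : Aˣ) : A)‖ < ε) :
    (∀ σ : A →L[ℂ] ℂ, (∀ a b : A, σ (a * b) = σ (b * a)) → σ = σ 1 • τ) ∧
      (∀ σ : A →L[ℂ] ℂ, (∀ a b : A, σ (a * b) = σ (b * a)) → σ 1 = 1 → σ = τ) :=
  gPowers_unique_trace_general w τ hτ1 hτw hdense hPowers
end

section
/- Let G be a group and p ∈ [1,∞). Let w_p be the left regular representation of G on ℓ^p(G) and F^p_r(G) the closed linear span of {w_p(g)} in B(ℓ^p(G)). If a ∈ F^p_r(G) satisfies τ_p(a·w_p(g)) = 0 for all g ∈ G, where τ_p(a) = (aδ_1)(1), then a = 0. -/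
open scoped ENNReal

/-!
Every operator `b` in the closed span of the left regular representation commutes with right
translations, so its matrix is constant along the diagonals: `(b δ_g)(h) = (b δ_1)(h g⁻¹)`
(this holds for each `w_p(g₀)`, and the identity is a closed linear condition on `b`).
Hence `τ_p(b w_p(g)) = (b δ_1)(g⁻¹)`, so vanishing of all these traces kills the column
`b δ_1`, then every column `b δ_g`, and finally `b` itself since the `δ_g` span a dense subspace
of `ℓ^p(G)` for `p < ∞`.
-/

namespace lp

variable {ι 𝕜 : Type*} [NormedField 𝕜] [DecidableEq ι] {p : ℝ≥0∞} [Fact (1 ≤ p)]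

theorem ext_continuousLinearMap_single_one (hp : p ≠ ⊤) {F : Type*} [AddCommMonoid F]
    [Module 𝕜 F] [TopologicalSpace F] [T2Space F] {f g : lp (fun _ : ι => 𝕜) p →L[𝕜] F}
    (h : ∀ i, f (lp.single p i 1) = g (lp.single p i 1)) : f = g :=
  ext_continuousLinearMap hp fun i => ContinuousLinearMap.ext_ring (h i)

end lp

section LeftRegular

variable {G 𝕜 : Type*} [Group G] [DecidableEq G] [NontriviallyNormedField 𝕜]
  {p : ℝ≥0∞} [Fact (1 ≤ p)]
  {W : G → (lp (fun _ : G => 𝕜) p →L[𝕜] lp (fun _ : G => 𝕜) p)}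

theorem leftRegular_apply_single (hW : ∀ g ξ h, (W g ξ) h = ξ (g⁻¹ * h)) (g k : G) (c : 𝕜) :
    W g (lp.single p k c) = lp.single p (g * k) c := by
  ext h
  simp [hW, Pi.single_apply, inv_mul_eq_iff_eq_mul]

theorem apply_single_apply_of_mem_closure_span
    (hW : ∀ g ξ h, (W g ξ) h = ξ (g⁻¹ * h))
    {b : lp (fun _ : G => 𝕜) p →L[𝕜] lp (fun _ : G => 𝕜) p}
    (hb : b ∈ (Submodule.span 𝕜 (Set.range W)).topologicalClosure) (g h : G) :
    b (lp.single p g 1) h = b (lp.single p 1 1) (h * g⁻¹) := by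
  refine ContinuousLinearMap.eqOn_closure_span
    (f := (lp.evalCLM 𝕜 (fun _ : G => 𝕜) p h).comp
      (ContinuousLinearMap.apply 𝕜 _ (lp.single p g 1)))
    (g := (lp.evalCLM 𝕜 (fun _ : G => 𝕜) p (h * g⁻¹)).comp
      (ContinuousLinearMap.apply 𝕜 _ (lp.single p 1 1)))
    ?_ hb
  rintro _ ⟨g₀, rfl⟩
  simp [lp.evalCLM, leftRegular_apply_single hW, Pi.single_apply, mul_inv_eq_iff_eq_mul]

theorem apply_leftRegular_single_one_of_mem_closure_span
    (hW : ∀ g ξ h, (W g ξ) h = ξ (g⁻¹ * h))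
    {b : lp (fun _ : G => 𝕜) p →L[𝕜] lp (fun _ : G => 𝕜) p}
    (hb : b ∈ (Submodule.span 𝕜 (Set.range W)).topologicalClosure) (g : G) :
    b (W g (lp.single p 1 1)) 1 = b (lp.single p 1 1) g⁻¹ := by
  rw [leftRegular_apply_single hW, mul_one, apply_single_apply_of_mem_closure_span hW hb, one_mul]

end LeftRegular

/-- faithfulness of the trace `τ_p` on `F^p_r(G)`: if `a` lies in the
closed span of the left regular representation and `τ_p (a * w_p g) = 0` for all `g`,
then `a = 0`. -/
theorem lp_regular_rep_trace_faithful
    {G : Type*} [Group G] [DecidableEq G] (p : ℝ≥0∞) [Fact (1 ≤ p)] (hp : p ≠ ⊤)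
    (W : G → (lp (fun _ : G => ℂ) p →L[ℂ] lp (fun _ : G => ℂ) p))
    (hW : ∀ (g : G) (ξ : lp (fun _ : G => ℂ) p) (h : G), (W g ξ) h = ξ (g⁻¹ * h))
    (τ : (lp (fun _ : G => ℂ) p →L[ℂ] lp (fun _ : G => ℂ) p) → ℂ)
    (hτ : ∀ a, τ a = (a (lp.single p (1 : G) (1 : ℂ))) (1 : G))
    (a : lp (fun _ : G => ℂ) p →L[ℂ] lp (fun _ : G => ℂ) p)
    (ha : a ∈ (Submodule.span ℂ (Set.range W)).topologicalClosure)
    (hvan : ∀ g : G, τ (a * W g) = 0) :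
    a = 0 := by
  have hcol : a (lp.single p 1 1) = 0 := by
    ext k
    simpa [hτ, apply_leftRegular_single_one_of_mem_closure_span hW ha] using hvan k⁻¹
  refine lp.ext_continuousLinearMap_single_one hp fun g => ?_
  ext h
  simp [apply_single_apply_of_mem_closure_span hW ha, hcol]
end

section
/- Let G be a group. If the reduced group C*-algebra C*_r(G) has the Powers property (for every finite S ⊆ G∖{1} and ε > 0 there are n and h₁,…,hₙ with ‖(1/n)∑ⱼ w₂(hⱼ g hⱼ⁻¹)‖ < ε for all g ∈ S), then for every p ∈ (1,∞) the algebra F^p_r(G) ⊆ B(ℓ^p(G)) has the Powers property with respect to the left regular representation w_p. -/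
/-!
Let `A = ∑ⱼ wⱼ λ(cⱼ)` be an average of left translations with probability weights. Since `A` has
nonnegative coefficients, `|Aξ| ≤ A|ξ|` pointwise, so `A` can be tested on `ℓ²` against
`η = |ξ|^{p/2}`, for which `‖η‖₂² = ‖ξ‖ₚᵖ` and `|Aη| = A|ξ|^{p/2}`. For `p ≥ 2` Jensen's inequality
gives `|Aξ|ᵖ ≤ |Aη|²` pointwise, hence `‖A‖ₚ ≤ ‖A‖₂^{2/p}`. For `p < 2` the log-convexity of
`s ↦ A|ξ|ˢ` (Hölder) gives `|Aξ|ᵖ ≤ (A|ξ|ᵖ)^{2-p} |Aη|^{2(p-1)}` pointwise; Hölder again over `G`,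
with `∑ A|ξ|ᵖ = ‖ξ‖ₚᵖ`, gives `‖A‖ₚ ≤ ‖A‖₂^{2(p-1)/p}`. So conjugation averages that are small on
`ℓ²` are small on `ℓᵖ`, with the same conjugating elements.
-/

open scoped ENNReal

namespace Real

theorem summable_and_tsum_rpow_mul_rpow_le {ι : Type*} {f g : ι → ℝ} {a b : ℝ}
    (ha : 0 < a) (hb : 0 < b) (hab : a + b = 1) (hf : ∀ i, 0 ≤ f i) (hg : ∀ i, 0 ≤ g i)
    (hf_sum : Summable f) (hg_sum : Summable g) :
    Summable (fun i => f i ^ a * g i ^ b) ∧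
      ∑' i, f i ^ a * g i ^ b ≤ (∑' i, f i) ^ a * (∑' i, g i) ^ b := by
  have hpq : a⁻¹.HolderConjugate b⁻¹ :=
    Real.holderConjugate_iff.2 ⟨(one_lt_inv₀ ha).2 (by linarith), by simpa using hab⟩
  have hf' : ∀ i, (f i ^ a) ^ a⁻¹ = f i := fun i => Real.rpow_rpow_inv (hf i) ha.ne'
  have hg' : ∀ i, (g i ^ b) ^ b⁻¹ = g i := fun i => Real.rpow_rpow_inv (hg i) hb.ne'
  simpa only [hf', hg', one_div, inv_inv] using
    Real.summable_and_inner_le_Lp_mul_Lq_tsum_of_nonneg hpq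
      (fun i => Real.rpow_nonneg (hf i) a) (fun i => Real.rpow_nonneg (hg i) b)
      (by simpa only [hf'] using hf_sum) (by simpa only [hg'] using hg_sum)

theorem rpow_sum_mul_le_sq_sum_mul_rpow {ι : Type*} (s : Finset ι) {w z : ι → ℝ} {q : ℝ}
    (hq : 2 ≤ q) (hw : ∀ i ∈ s, 0 ≤ w i) (hw₁ : ∑ i ∈ s, w i = 1) (hz : ∀ i ∈ s, 0 ≤ z i) :
    (∑ i ∈ s, w i * z i) ^ q ≤ (∑ i ∈ s, w i * z i ^ (q / 2)) ^ 2 := by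
  have hsum : 0 ≤ ∑ i ∈ s, w i * z i :=
    Finset.sum_nonneg fun i hi => mul_nonneg (hw i hi) (hz i hi)
  calc (∑ i ∈ s, w i * z i) ^ q = ((∑ i ∈ s, w i * z i) ^ (q / 2)) ^ 2 := by
        rw [← Real.rpow_mul_natCast hsum]; ring_nf
    _ ≤ _ := pow_le_pow_left₀ (Real.rpow_nonneg hsum _)
        (Real.rpow_arith_mean_le_arith_mean_rpow s w z hw hw₁ hz (by linarith)) 2

theorem rpow_sum_mul_le_of_lt_two {ι : Type*} [Fintype ι] {w z : ι → ℝ} {q : ℝ}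
    (hq₁ : 1 < q) (hq₂ : q < 2) (hw : ∀ i, 0 ≤ w i) (hz : ∀ i, 0 ≤ z i) :
    (∑ i, w i * z i) ^ q
      ≤ (∑ i, w i * z i ^ q) ^ (2 - q) * ((∑ i, w i * z i ^ (q / 2)) ^ 2) ^ (q - 1) := by
  have hq₀ : 0 < q := by linarith
  have ha : 0 < (2 - q) / q := div_pos (by linarith) hq₀
  have hb : 0 < 2 * (q - 1) / q := div_pos (by linarith) hq₀
  have hab : (2 - q) / q + 2 * (q - 1) / q = 1 := by field_simp; ring
  have hz_exp : q * ((2 - q) / q) + q / 2 * (2 * (q - 1) / q) = 1 := by field_simp; ring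
  have hpos : ∀ i, 0 ≤ w i * z i ^ q ∧ 0 ≤ w i * z i ^ (q / 2) := fun i =>
    ⟨mul_nonneg (hw i) (Real.rpow_nonneg (hz i) _), mul_nonneg (hw i) (Real.rpow_nonneg (hz i) _)⟩
  -- Hölder for the weights `w z ^ q` and `w z ^ (q / 2)`, with exponents chosen so that
  -- `a + b = 1` and `q a + (q / 2) b = 1`.
  set a := (2 - q) / q
  set b := 2 * (q - 1) / q
  have hfactor : ∀ i, (w i * z i ^ q) ^ a * (w i * z i ^ (q / 2)) ^ b = w i * z i := fun i => by
    rw [Real.mul_rpow (hw i) (Real.rpow_nonneg (hz i) _),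
      Real.mul_rpow (hw i) (Real.rpow_nonneg (hz i) _), ← Real.rpow_mul (hz i),
      ← Real.rpow_mul (hz i), mul_mul_mul_comm, ← Real.rpow_add' (hw i) (by simp [hab]),
      ← Real.rpow_add' (hz i) (by simp [hz_exp]), hab, hz_exp, Real.rpow_one, Real.rpow_one]
  have hholder := (summable_and_tsum_rpow_mul_rpow_le (f := fun i => w i * z i ^ q)
    (g := fun i => w i * z i ^ (q / 2)) ha hb hab
    (fun i => (hpos i).1) (fun i => (hpos i).2) .of_finite .of_finite).2
  simp only [tsum_fintype, hfactor] at hholder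
  have hX : 0 ≤ ∑ i, w i * z i ^ q := Finset.sum_nonneg fun i _ => (hpos i).1
  have hY : 0 ≤ ∑ i, w i * z i ^ (q / 2) := Finset.sum_nonneg fun i _ => (hpos i).2
  calc (∑ i, w i * z i) ^ q
      ≤ ((∑ i, w i * z i ^ q) ^ a * (∑ i, w i * z i ^ (q / 2)) ^ b) ^ q := by
        gcongr
        exact Finset.sum_nonneg fun i _ => mul_nonneg (hw i) (hz i)
    _ = _ := by
        rw [Real.mul_rpow (by positivity) (by positivity), ← Real.rpow_mul hX, ← Real.rpow_natCast,
          ← Real.rpow_mul hY, ← Real.rpow_mul hY]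
        congr 2
        · exact div_mul_cancel₀ _ hq₀.ne'
        · rw [div_mul_cancel₀ _ hq₀.ne']; push_cast; ring

end Real

theorem lp.hasSum_norm_sq {X E : Type*} [NormedAddCommGroup E] (f : lp (fun _ : X => E) 2) :
    HasSum (fun x => ‖f x‖ ^ 2) (‖f‖ ^ 2) := by
  simpa using lp.hasSum_norm (p := 2) (by norm_num) f

theorem lp.exists_ofReal_norm_rpow_half {X E : Type*} [NormedAddCommGroup E] {p : ℝ≥0∞}
    (hp : 0 < p.toReal) (ξ : lp (fun _ : X => E) p) :
    ∃ η : lp (fun _ : X => ℂ) 2,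
      (∀ x, η x = ((‖ξ x‖ ^ (p.toReal / 2) : ℝ) : ℂ)) ∧ ‖η‖ ^ 2 = ‖ξ‖ ^ p.toReal := by
  have hsq : ∀ x, ‖((‖ξ x‖ ^ (p.toReal / 2) : ℝ) : ℂ)‖ ^ 2 = ‖ξ x‖ ^ p.toReal := fun x => by
    rw [Complex.norm_of_nonneg (by positivity), ← Real.rpow_mul_natCast (norm_nonneg _)]
    ring_nf
  have hmem : Memℓp (fun x => ((‖ξ x‖ ^ (p.toReal / 2) : ℝ) : ℂ)) 2 :=
    memℓp_gen (by
      simpa only [ENNReal.toReal_ofNat, Real.rpow_two, hsq] using (lp.hasSum_norm hp ξ).summable)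
  let η : lp (fun _ : X => ℂ) 2 := ⟨_, hmem⟩
  refine ⟨η, fun x => rfl, (lp.hasSum_norm_sq η).unique ?_⟩
  simpa only [η, hsq] using lp.hasSum_norm hp ξ

section PermAverage

variable {X ι : Type*} [Fintype ι] {w : ι → ℝ} {σ : ι → Equiv.Perm X} {p : ℝ≥0∞}

def IsPermAverage [Fact (1 ≤ p)] (w : ι → ℝ) (σ : ι → Equiv.Perm X)
    (T : lp (fun _ : X => ℂ) p →L[ℂ] lp (fun _ : X => ℂ) p) : Prop :=
  ∀ ξ x, T ξ x = ∑ j, w j • ξ (σ j x)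

theorem hasSum_sum_mul_norm_rpow_comp {E : Type*} [NormedAddCommGroup E] (hw₁ : ∑ j, w j = 1)
    (hp : 0 < p.toReal) (ξ : lp (fun _ : X => E) p) :
    HasSum (fun x => ∑ j, w j * ‖ξ (σ j x)‖ ^ p.toReal) (‖ξ‖ ^ p.toReal) := by
  have h : ∀ j, HasSum (fun x => ‖ξ (σ j x)‖ ^ p.toReal) (‖ξ‖ ^ p.toReal) := fun j =>
    (σ j).hasSum_iff.2 (lp.hasSum_norm hp ξ)
  simpa only [← Finset.sum_mul, hw₁, one_mul] using
    hasSum_sum (s := Finset.univ) fun j _ => (h j).mul_left (w j)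

namespace IsPermAverage

variable [Fact (1 ≤ p)] {T : lp (fun _ : X => ℂ) p →L[ℂ] lp (fun _ : X => ℂ) p}

theorem norm_apply_le (hT : IsPermAverage w σ T) (hw : ∀ j, 0 ≤ w j) (ξ : lp (fun _ : X => ℂ) p)
    (x : X) : ‖T ξ x‖ ≤ ∑ j, w j * ‖ξ (σ j x)‖ := by
  rw [hT]
  refine (norm_sum_le _ _).trans_eq (Finset.sum_congr rfl fun j _ => ?_)
  rw [norm_smul, Real.norm_of_nonneg (hw j)]

theorem norm_apply_of_ofReal (hT : IsPermAverage w σ T) (hw : ∀ j, 0 ≤ w j)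
    {η : lp (fun _ : X => ℂ) p} {r : X → ℝ} (hr : ∀ x, 0 ≤ r x) (hη : ∀ x, η x = r x) (x : X) :
    ‖T η x‖ = ∑ j, w j * r (σ j x) := by
  simp only [hT η x, hη, Complex.real_smul, ← Complex.ofReal_mul, ← Complex.ofReal_sum]
  exact Complex.norm_of_nonneg (Finset.sum_nonneg fun j _ => mul_nonneg (hw j) (hr _))

variable {T₂ : lp (fun _ : X => ℂ) 2 →L[ℂ] lp (fun _ : X => ℂ) 2} {ξ : lp (fun _ : X => ℂ) p}
  {η : lp (fun _ : X => ℂ) 2}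

theorem norm_rpow_le_norm_sq_of_two_le (hT : IsPermAverage w σ T) (hT₂ : IsPermAverage w σ T₂)
    (hw : ∀ j, 0 ≤ w j) (hw₁ : ∑ j, w j = 1) (hp : 2 ≤ p.toReal)
    (hη : ∀ x, η x = ((‖ξ x‖ ^ (p.toReal / 2) : ℝ) : ℂ)) :
    ‖T ξ‖ ^ p.toReal ≤ ‖T₂ η‖ ^ 2 := by
  refine hasSum_le (fun x => ?_) (lp.hasSum_norm (by linarith) (T ξ)) (lp.hasSum_norm_sq (T₂ η))
  calc ‖T ξ x‖ ^ p.toReal ≤ (∑ j, w j * ‖ξ (σ j x)‖) ^ p.toReal := by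
        gcongr
        exact hT.norm_apply_le hw ξ x
    _ ≤ (∑ j, w j * ‖ξ (σ j x)‖ ^ (p.toReal / 2)) ^ 2 :=
        Real.rpow_sum_mul_le_sq_sum_mul_rpow _ hp (fun j _ => hw j) hw₁ fun j _ => norm_nonneg _
    _ = ‖T₂ η x‖ ^ 2 := by
        rw [hT₂.norm_apply_of_ofReal hw (fun _ => by positivity) hη]

theorem norm_rpow_le_of_lt_two (hT : IsPermAverage w σ T) (hT₂ : IsPermAverage w σ T₂)
    (hw : ∀ j, 0 ≤ w j) (hw₁ : ∑ j, w j = 1) (hp₁ : 1 < p.toReal) (hp₂ : p.toReal < 2)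
    (hη : ∀ x, η x = ((‖ξ x‖ ^ (p.toReal / 2) : ℝ) : ℂ)) :
    ‖T ξ‖ ^ p.toReal ≤ (‖ξ‖ ^ p.toReal) ^ (2 - p.toReal) * (‖T₂ η‖ ^ 2) ^ (p.toReal - 1) := by
  set q := p.toReal
  have hF := hasSum_sum_mul_norm_rpow_comp (σ := σ) hw₁ (by linarith) ξ
  have hG := lp.hasSum_norm_sq (T₂ η)
  obtain ⟨hsum, hholder⟩ := Real.summable_and_tsum_rpow_mul_rpow_le (a := 2 - q) (b := q - 1)
    (by linarith) (by linarith)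
    (by ring) (fun x => Finset.sum_nonneg fun j _ => mul_nonneg (hw j) (by positivity))
    (fun x => by positivity) hF.summable hG.summable
  rw [hF.tsum_eq, hG.tsum_eq] at hholder
  refine le_trans (hasSum_le (fun x => ?_) (lp.hasSum_norm (by linarith) (T ξ)) hsum.hasSum)
    hholder
  calc ‖T ξ x‖ ^ q ≤ (∑ j, w j * ‖ξ (σ j x)‖) ^ q := by
        gcongr
        exact hT.norm_apply_le hw ξ x
    _ ≤ (∑ j, w j * ‖ξ (σ j x)‖ ^ q) ^ (2 - q)
          * ((∑ j, w j * ‖ξ (σ j x)‖ ^ (q / 2)) ^ 2) ^ (q - 1) :=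
        Real.rpow_sum_mul_le_of_lt_two hp₁ hp₂ hw fun j => norm_nonneg _
    _ = _ := by
        rw [hT₂.norm_apply_of_ofReal hw (fun _ => by positivity) hη]

theorem norm_rpow_le (hT : IsPermAverage w σ T) (hT₂ : IsPermAverage w σ T₂)
    (hw : ∀ j, 0 ≤ w j) (hw₁ : ∑ j, w j = 1) (hp : 1 < p.toReal) (ξ : lp (fun _ : X => ℂ) p) :
    ‖T ξ‖ ^ p.toReal ≤ ‖T₂‖ ^ (2 * min 1 (p.toReal - 1)) * ‖ξ‖ ^ p.toReal := by
  set q := p.toReal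
  obtain ⟨η, hη, hηξ⟩ := lp.exists_ofReal_norm_rpow_half (by linarith) ξ
  have hT₂η : ‖T₂ η‖ ^ 2 ≤ ‖T₂‖ ^ 2 * ‖ξ‖ ^ q := by
    rw [← hηξ, ← mul_pow]
    exact pow_le_pow_left₀ (norm_nonneg _) (T₂.le_opNorm η) 2
  rcases le_or_gt 2 q with hp₂ | hp₂
  · rw [min_eq_left (by linarith), mul_one, Real.rpow_two]
    exact (norm_rpow_le_norm_sq_of_two_le hT hT₂ hw hw₁ hp₂ hη).trans hT₂η
  · rw [min_eq_right (by linarith)]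
    calc ‖T ξ‖ ^ q ≤ (‖ξ‖ ^ q) ^ (2 - q) * (‖T₂ η‖ ^ 2) ^ (q - 1) :=
          norm_rpow_le_of_lt_two hT hT₂ hw hw₁ hp hp₂ hη
      _ ≤ (‖ξ‖ ^ q) ^ (2 - q) * (‖T₂‖ ^ 2 * ‖ξ‖ ^ q) ^ (q - 1) := by gcongr
      _ = ‖T₂‖ ^ (2 * (q - 1)) * ‖ξ‖ ^ q := by
          have hA : 0 ≤ ‖ξ‖ ^ q := by positivity
          rw [Real.mul_rpow (by positivity) hA, mul_left_comm,
            ← Real.rpow_add' hA (by ring_nf; norm_num), show 2 - q + (q - 1) = 1 by ring,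
            Real.rpow_one, ← Real.rpow_natCast, ← Real.rpow_mul (norm_nonneg _)]
          norm_num

theorem opNorm_le_opNorm_rpow (hT : IsPermAverage w σ T) (hT₂ : IsPermAverage w σ T₂)
    (hw : ∀ j, 0 ≤ w j) (hw₁ : ∑ j, w j = 1) (hp : 1 < p.toReal) :
    ‖T‖ ≤ ‖T₂‖ ^ (2 * min 1 (p.toReal - 1) / p.toReal) := by
  have hq : 0 < p.toReal := by linarith
  refine T.opNorm_le_bound (by positivity) fun ξ => ?_
  rw [← Real.rpow_le_rpow_iff (norm_nonneg _) (by positivity) hq,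
    Real.mul_rpow (by positivity) (norm_nonneg _), ← Real.rpow_mul (norm_nonneg _),
    div_mul_cancel₀ _ hq.ne']
  exact hT.norm_rpow_le hT₂ hw hw₁ hp ξ

end IsPermAverage

end PermAverage

theorem isPermAverage_inv_natCast_smul_sum {G : Type*} [Group G] {p : ℝ≥0∞} [Fact (1 ≤ p)]
    {W : G → (lp (fun _ : G => ℂ) p →L[ℂ] lp (fun _ : G => ℂ) p)}
    (hW : ∀ (g : G) (ξ : lp (fun _ : G => ℂ) p) (h : G), W g ξ h = ξ (g⁻¹ * h))
    {n : ℕ} (c : Fin n → G) :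
    IsPermAverage (fun _ => (n : ℝ)⁻¹) (fun j => Equiv.mulLeft (c j)⁻¹)
      ((n : ℝ)⁻¹ • ∑ j, W (c j)) := fun ξ x => by
  simp only [smul_apply, sum_apply, lp.coeFn_smul,
    lp.coeFn_sum, Pi.smul_apply, Finset.sum_apply, Finset.smul_sum, hW, Equiv.coe_mulLeft]

/-- if the left regular representation on `ℓ²(G)` (i.e. `C*_r(G)`) has the
Powers property, then for every `p ∈ (1,∞)` the left regular representation on `ℓ^p(G)`
has the Powers property. -/
theorem powers_property_transfers_to_lp
    {G : Type*} [Group G]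
    (W : ∀ (p : ℝ≥0∞) [Fact (1 ≤ p)],
      G → (lp (fun _ : G => ℂ) p →L[ℂ] lp (fun _ : G => ℂ) p))
    (hW : ∀ (p : ℝ≥0∞) [Fact (1 ≤ p)],
      ∀ (g : G) (ξ : lp (fun _ : G => ℂ) p) (h : G), (W p g ξ) h = ξ (g⁻¹ * h))
    (hPowers2 : ∀ S : Finset G, (1 : G) ∉ S → ∀ ε : ℝ, 0 < ε →
      ∃ (n : ℕ) (h : Fin n → G), 0 < n ∧ ∀ g ∈ S,
        ‖(n : ℝ)⁻¹ • ∑ j : Fin n, W 2 (h j * g * (h j)⁻¹)‖ < ε) :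
    ∀ (p : ℝ≥0∞) [Fact (1 ≤ p)], 1 < p → p ≠ ⊤ →
      ∀ S : Finset G, (1 : G) ∉ S → ∀ ε : ℝ, 0 < ε →
        ∃ (n : ℕ) (h : Fin n → G), 0 < n ∧ ∀ g ∈ S,
          ‖(n : ℝ)⁻¹ • ∑ j : Fin n, W p (h j * g * (h j)⁻¹)‖ < ε := by
  intro p _ hp hp_top S hS ε hε
  have hq : 1 < p.toReal := by simpa using ENNReal.toReal_strict_mono hp_top hp
  set α := 2 * min 1 (p.toReal - 1) / p.toReal
  have hα : 0 < α := div_pos (mul_pos two_pos (lt_min one_pos (by linarith))) (by linarith)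
  obtain ⟨n, h, hn, hsmall⟩ := hPowers2 S hS (ε ^ α⁻¹) (by positivity)
  refine ⟨n, h, hn, fun g hg => ?_⟩
  have hw₁ : ∑ _j : Fin n, (n : ℝ)⁻¹ = 1 := by simp [hn.ne']
  calc ‖(n : ℝ)⁻¹ • ∑ j, W p (h j * g * (h j)⁻¹)‖
      ≤ ‖(n : ℝ)⁻¹ • ∑ j, W 2 (h j * g * (h j)⁻¹)‖ ^ α :=
        (isPermAverage_inv_natCast_smul_sum (hW p) _).opNorm_le_opNorm_rpow
          (isPermAverage_inv_natCast_smul_sum (hW 2) _) (fun _ => by positivity) hw₁ hq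
    _ < (ε ^ α⁻¹) ^ α := Real.rpow_lt_rpow (norm_nonneg _) (hsmall g hg) hα
    _ = ε := Real.rpow_inv_rpow hε.le hα.ne'
end

section
/- Let M be a continuous strictly increasing bijection of [0,∞) with M(1) = 1, and define the Matuszewska-type indices α₀(M) = sup_{t₀∈(0,1]} α₀(M,t₀) and α₁(M) = inf_{t₀∈(0,1]} α₁(M,t₀), where α₀(M,t₀) = sup{ r > 0 : sup_{λ∈(0,1],t∈(0,t₀]} M(λt)/(M(λ)t^r) < ∞ } and α₁(M,t₀) = inf{ r > 0 : inf_{λ∈(0,1],t∈(0,t₀]} M(λt)/(M(λ)t^r) > 0 }. Then α₀(M⁻¹) = α₁(M)⁻¹ and α₁(M⁻¹) = α₀(M)⁻¹. -/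
/-!
If `c M(λ) tʳ ≤ M(λt)`, substitute `u = M(λ)` and `v = c tʳ` and apply the increasing map `φ = M⁻¹`:
this gives `φ(uv) ≤ c^{-1/r} φ(u) v^{1/r}` for small `v`, i.e. `r ∈ S₁(M)` yields `1/r ∈ S₀(φ)`.
The same substitution turns `r ∈ S₀(M)` into `1/r ∈ S₁(φ)`. Hence `α₀(φ) ≥ α₁(M)⁻¹` and
`α₁(φ) ≤ α₀(M)⁻¹`, and since `M` is in turn the inverse of `φ`, the reverse inequalities follow
by symmetry.
-/

open Set
open scoped ENNReal

/-- `M` belongs to the class `𝓕` of continuous strictly increasing bijections of `[0,∞)`. -/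
def MemFcal (M : ℝ → ℝ) : Prop :=
  ContinuousOn M (Ici 0) ∧ StrictMonoOn M (Ici 0) ∧ BijOn M (Ici 0) (Ici 0)

def S0 (M : ℝ → ℝ) (t₀ : ℝ) : Set ℝ :=
  {r | 0 < r ∧ ∃ C : ℝ, ∀ l ∈ Ioc (0 : ℝ) 1, ∀ t ∈ Ioc (0 : ℝ) t₀,
    M (l * t) ≤ C * (M l * t ^ r)}

def S1 (M : ℝ → ℝ) (t₀ : ℝ) : Set ℝ :=
  {r | 0 < r ∧ ∃ c : ℝ, 0 < c ∧ ∀ l ∈ Ioc (0 : ℝ) 1, ∀ t ∈ Ioc (0 : ℝ) t₀,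
    c * (M l * t ^ r) ≤ M (l * t)}

noncomputable def alpha0 (M : ℝ → ℝ) (t₀ : ℝ) : ℝ≥0∞ :=
  ⨆ r ∈ S0 M t₀, ENNReal.ofReal r

noncomputable def alpha1 (M : ℝ → ℝ) (t₀ : ℝ) : ℝ≥0∞ :=
  ⨅ r ∈ S1 M t₀, ENNReal.ofReal r

/-- The lower Matuszewska-type index `α₀(M)`. -/
noncomputable def alpha0' (M : ℝ → ℝ) : ℝ≥0∞ := ⨆ t₀ ∈ Ioc (0 : ℝ) 1, alpha0 M t₀

/-- The upper Matuszewska-type index `α₁(M)`. -/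
noncomputable def alpha1' (M : ℝ → ℝ) : ℝ≥0∞ := ⨅ t₀ ∈ Ioc (0 : ℝ) 1, alpha1 M t₀

theorem StrictMonoOn.of_rightInvOn {α β : Type*} [LinearOrder α] [Preorder β] {f : α → β}
    {g : β → α} {s : Set α} {t : Set β} (hf : StrictMonoOn f s) (hg : MapsTo g t s)
    (hfg : RightInvOn g f t) : StrictMonoOn g t := by
  intro a ha b hb hab
  by_contra! hba
  have := hf.monotoneOn (hg hb) (hg ha) hba
  rw [hfg ha, hfg hb] at this
  exact this.not_gt hab

theorem exists_mul_rpow_eq {c r t₀ v : ℝ} (hc : 0 < c) (hr : 0 < r) (ht₀ : 0 < t₀)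
    (hv : v ∈ Ioc 0 (c * t₀ ^ r)) :
    ∃ t ∈ Ioc 0 t₀, c * t ^ r = v ∧ t = (c ^ r⁻¹)⁻¹ * v ^ r⁻¹ := by
  have hvc : 0 < v / c := div_pos hv.1 hc
  refine ⟨(v / c) ^ r⁻¹, ⟨by positivity, ?_⟩, ?_, ?_⟩
  · calc (v / c) ^ r⁻¹ ≤ (t₀ ^ r) ^ r⁻¹ := by
          gcongr
          rw [div_le_iff₀ hc, mul_comm]
          exact hv.2
      _ = t₀ := Real.rpow_rpow_inv ht₀.le hr.ne'
  · rw [Real.rpow_inv_rpow hvc.le hr.ne']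
    field_simp
  · rw [Real.div_rpow hv.1.le hc.le, div_eq_inv_mul]

structure NormalizedInversePair (N ψ : ℝ → ℝ) : Prop where
  strictMonoOn : StrictMonoOn N (Ici 0)
  mapsTo : MapsTo N (Ici 0) (Ici 0)
  map_one : N 1 = 1
  mapsTo_inv : MapsTo ψ (Ici 0) (Ici 0)
  invOn : InvOn ψ N (Ici 0) (Ici 0)

namespace NormalizedInversePair

variable {N ψ : ℝ → ℝ} (h : NormalizedInversePair N ψ)
include h

theorem symm : NormalizedInversePair ψ N where
  strictMonoOn := h.strictMonoOn.of_rightInvOn h.mapsTo_inv h.invOn.2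
  mapsTo := h.mapsTo_inv
  map_one := by simpa [h.map_one] using h.invOn.1 (show (1 : ℝ) ∈ Ici 0 by norm_num)
  mapsTo_inv := h.mapsTo
  invOn := h.invOn.symm

theorem map_pos {x : ℝ} (hx : 0 < x) : 0 < N x :=
  (h.mapsTo (self_mem_Ici (a := 0))).trans_lt (h.strictMonoOn self_mem_Ici hx.le hx)

theorem mapsTo_Ioc : MapsTo N (Ioc 0 1) (Ioc 0 1) := fun _ hx =>
  ⟨h.map_pos hx.1, h.map_one ▸ h.strictMonoOn.monotoneOn hx.1.le (mem_Ici.2 zero_le_one) hx.2⟩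

theorem le_map_iff {x y : ℝ} (hx : 0 ≤ x) (hy : 0 ≤ y) : y ≤ N x ↔ ψ y ≤ x := by
  rw [← h.symm.strictMonoOn.le_iff_le hy (h.mapsTo hx), h.invOn.1 hx]

theorem map_le_iff {x y : ℝ} (hx : 0 ≤ x) (hy : 0 ≤ y) : N x ≤ y ↔ x ≤ ψ y := by
  rw [← h.symm.strictMonoOn.le_iff_le (h.mapsTo hx) hy, h.invOn.1 hx]

theorem exists_inv_mem_S0_of_mem_S1 {t₀ r : ℝ} (ht₀ : 0 < t₀) (hr : r ∈ S1 N t₀) :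
    ∃ t₁ ∈ Ioc (0 : ℝ) 1, r⁻¹ ∈ S0 ψ t₁ := by
  obtain ⟨hr, c, hc, hS1⟩ := hr
  refine ⟨min 1 (c * t₀ ^ r), ⟨by positivity, min_le_left _ _⟩, inv_pos.2 hr, (c ^ r⁻¹)⁻¹,
    fun u hu v hv => ?_⟩
  obtain ⟨t, ht, hvt, ht_eq⟩ :=
    exists_mul_rpow_eq hc hr ht₀ ⟨hv.1, hv.2.trans (min_le_right _ _)⟩
  have hψu := h.symm.mapsTo_Ioc hu
  have key := hS1 (ψ u) hψu t ht
  rw [h.invOn.2 hu.1.le, mul_left_comm, hvt] at key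
  calc ψ (u * v) ≤ ψ u * t :=
        (h.le_map_iff (mul_pos hψu.1 ht.1).le (mul_pos hu.1 hv.1).le).1 key
    _ = (c ^ r⁻¹)⁻¹ * (ψ u * v ^ r⁻¹) := by rw [ht_eq]; ring

theorem exists_inv_mem_S1_of_mem_S0 {t₀ r : ℝ} (ht₀ : 0 < t₀) (hr : r ∈ S0 N t₀) :
    ∃ t₁ ∈ Ioc (0 : ℝ) 1, r⁻¹ ∈ S1 ψ t₁ := by
  obtain ⟨hr, C, hS0⟩ := hr
  have hC : 0 < C := by
    have := hS0 1 ⟨one_pos, le_rfl⟩ t₀ ⟨ht₀, le_rfl⟩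
    rw [one_mul, h.map_one, one_mul] at this
    exact pos_of_mul_pos_left ((h.map_pos ht₀).trans_le this) (by positivity)
  refine ⟨min 1 (C * t₀ ^ r), ⟨by positivity, min_le_left _ _⟩, inv_pos.2 hr, (C ^ r⁻¹)⁻¹,
    by positivity, fun u hu v hv => ?_⟩
  obtain ⟨t, ht, hvt, ht_eq⟩ :=
    exists_mul_rpow_eq hC hr ht₀ ⟨hv.1, hv.2.trans (min_le_right _ _)⟩
  have hψu := h.symm.mapsTo_Ioc hu
  have key := hS0 (ψ u) hψu t ht
  rw [h.invOn.2 hu.1.le, mul_left_comm, hvt] at key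
  calc (C ^ r⁻¹)⁻¹ * (ψ u * v ^ r⁻¹) = ψ u * t := by rw [ht_eq]; ring
    _ ≤ ψ (u * v) :=
        (h.map_le_iff (mul_pos hψu.1 ht.1).le (mul_pos hu.1 hv.1).le).1 key

theorem alpha0'_le_inv_alpha1' : alpha0' N ≤ (alpha1' ψ)⁻¹ := by
  refine iSup₂_le fun t₀ ht₀ => iSup₂_le fun r hr => ?_
  obtain ⟨t₁, ht₁, hr'⟩ := h.exists_inv_mem_S1_of_mem_S0 ht₀.1 hr
  rw [ENNReal.le_inv_iff_le_inv, ← ENNReal.ofReal_inv_of_pos hr.1]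
  exact iInf₂_le_of_le t₁ ht₁ (iInf₂_le r⁻¹ hr')

theorem inv_alpha0'_le_alpha1' : (alpha0' ψ)⁻¹ ≤ alpha1' N := by
  refine le_iInf₂ fun t₀ ht₀ => le_iInf₂ fun r hr => ?_
  obtain ⟨t₁, ht₁, hr'⟩ := h.exists_inv_mem_S0_of_mem_S1 ht₀.1 hr
  rw [ENNReal.inv_le_iff_inv_le, ← ENNReal.ofReal_inv_of_pos hr.1]
  exact le_iSup₂_of_le t₁ ht₁ (le_iSup₂ (f := fun s (_ : s ∈ S0 ψ t₁) => ENNReal.ofReal s) r⁻¹ hr')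

end NormalizedInversePair

/-- for `M ∈ 𝓕` with `M(1) = 1` and inverse `φ`,
`α₀(M⁻¹) = α₁(M)⁻¹` and `α₁(M⁻¹) = α₀(M)⁻¹`. -/
theorem matuszewska_indices_of_inverse
    (M φ : ℝ → ℝ) (hM : MemFcal M) (hM1 : M 1 = 1)
    (hφ : MapsTo φ (Ici 0) (Ici 0)) (hφinv : InvOn φ M (Ici 0) (Ici 0)) :
    alpha0' φ = (alpha1' M)⁻¹ ∧ alpha1' φ = (alpha0' M)⁻¹ := by
  have h : NormalizedInversePair M φ := ⟨hM.2.1, hM.2.2.mapsTo, hM1, hφ, hφinv⟩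
  refine ⟨le_antisymm h.symm.alpha0'_le_inv_alpha1' ?_,
    le_antisymm ?_ h.symm.inv_alpha0'_le_alpha1'⟩
  · exact ENNReal.inv_le_iff_inv_le.1 h.inv_alpha0'_le_alpha1'
  · exact ENNReal.le_inv_iff_le_inv.1 h.alpha0'_le_inv_alpha1'
end

section
/- Let M be a continuous strictly increasing bijection of [0,∞) and let β₀, β₁ ∈ (0,∞) satisfy β₀ < α₀(M) and α₁(M) < β₁ (for the indices α₀, α₁ defined via suprema/infima of M(λt)/(M(λ)t^r) over λ ∈ (0,1], t ∈ (0,t₀]). Then there exist a continuous strictly increasing bijection N of [0,∞), equivalent to M at zero with N(1) = 1, and t₀ ∈ (0,1], such that N(λ)t^{β₁} ≤ N(λt) ≤ N(λ)t^{β₀} for all λ ∈ (0,1] and t ∈ (0,t₀]. Moreover, if M is convex then N may be chosen convex, and if M is concave then N may be chosen concave. -/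
open Set
open scoped ENNReal

/-- `M ∼ N`: equivalence at zero. -/
def EquivAtZero (M N : ℝ → ℝ) : Prop :=
  ∃ c₀ c₁ t₀ : ℝ, 0 < c₀ ∧ 0 < c₁ ∧ 0 < t₀ ∧
    ∀ t ∈ Icc (0 : ℝ) t₀, c₀⁻¹ * N (c₁⁻¹ * t) ≤ M t ∧ M t ≤ c₀ * N (c₁ * t)

open Filter Topology

/- The hypotheses on the indices provide exponents `r₀ > β₀` and `r₁ < β₁` with
`c M(λ) t^{r₁} ≤ M(λt) ≤ C M(λ) t^{r₀}` for small `t`. Since `t^{r₀ - β₀}` and `t^{β₁ - r₁}` tend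
to `0` as `t → 0⁺`, shrinking `t` absorbs the constants `C` and `c`. The normalization
`N = M / M(1)` is then equivalent to `M`, keeps convexity and concavity, and inherits the
bounds by homogeneity. -/

theorem MemFcal.nonneg {M : ℝ → ℝ} (hM : MemFcal M) {t : ℝ} (ht : 0 ≤ t) : 0 ≤ M t :=
  hM.2.2.mapsTo ht

theorem MemFcal.pos_one {M : ℝ → ℝ} (hM : MemFcal M) : 0 < M 1 :=
  (hM.nonneg le_rfl).trans_lt (hM.2.1 (mem_Ici.2 le_rfl) (mem_Ici.2 zero_le_one) zero_lt_one)

theorem MemFcal.const_mul {M : ℝ → ℝ} (hM : MemFcal M) {a : ℝ} (ha : 0 < a) :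
    MemFcal fun t => a * M t := by
  obtain ⟨hcont, hmono, hbij⟩ := hM
  have hmono' : StrictMonoOn (fun t => a * M t) (Ici 0) :=
    fun x hx y hy hxy => mul_lt_mul_of_pos_left (hmono hx hy hxy) ha
  refine ⟨hcont.const_smul a, hmono', ⟨?_, hmono'.injOn, ?_⟩⟩
  · exact fun t ht => mul_nonneg ha.le (hbij.mapsTo ht)
  · intro y hy
    obtain ⟨t, ht, hMt⟩ := hbij.surjOn (div_nonneg (mem_Ici.1 hy) ha.le)
    exact ⟨t, ht, by simp only [hMt, mul_div_cancel₀ _ ha.ne']⟩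

theorem equivAtZero_const_mul {M : ℝ → ℝ} (hM : ∀ t, 0 ≤ t → 0 ≤ M t) {a : ℝ} (ha : 0 < a) :
    EquivAtZero (fun t => a * M t) M := by
  refine ⟨max a a⁻¹, 1, 1, lt_max_of_lt_left ha, one_pos, one_pos, fun t ht => ?_⟩
  simp only [inv_one, one_mul]
  constructor
  · exact mul_le_mul_of_nonneg_right ((inv_le_comm₀ (by positivity) ha).2 (le_max_right _ _))
      (hM t ht.1)
  · exact mul_le_mul_of_nonneg_right (le_max_left _ _) (hM t ht.1)

theorem exists_mem_S0_of_ofReal_lt_alpha0' {M : ℝ → ℝ} {β : ℝ}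
    (h : ENNReal.ofReal β < alpha0' M) : ∃ t₀ > 0, ∃ r ∈ S0 M t₀, β < r := by
  simp only [alpha0', alpha0, lt_iSup_iff] at h
  obtain ⟨t₀, ht₀, r, hr, hβr⟩ := h
  exact ⟨t₀, ht₀.1, r, hr, (ENNReal.ofReal_lt_ofReal_iff hr.1).1 hβr⟩

theorem exists_mem_S1_of_alpha1'_lt_ofReal {M : ℝ → ℝ} {β : ℝ}
    (h : alpha1' M < ENNReal.ofReal β) : ∃ t₀ > 0, ∃ r ∈ S1 M t₀, r < β := by
  simp only [alpha1', alpha1, iInf_lt_iff] at h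
  obtain ⟨t₀, ht₀, r, hr, hrβ⟩ := h
  exact ⟨t₀, ht₀.1, r, hr, ((ENNReal.ofReal_lt_ofReal_iff'.1 hrβ).1)⟩

theorem eventually_const_mul_rpow_le_rpow {β r : ℝ} (h : β < r) (C : ℝ) :
    ∀ᶠ t in 𝓝[>] (0 : ℝ), C * t ^ r ≤ t ^ β := by
  have hlim : Tendsto (fun t : ℝ => C * t ^ (r - β)) (𝓝[>] 0) (𝓝 0) := by
    have hpow := (Real.continuousAt_rpow_const 0 (r - β) (Or.inr (sub_pos.2 h).le)).tendsto
    rw [Real.zero_rpow (sub_pos.2 h).ne'] at hpow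
    simpa using (hpow.const_mul C).mono_left (nhdsWithin_le_nhds (s := Ioi 0))
  filter_upwards [hlim.eventually (eventually_le_nhds zero_lt_one), self_mem_nhdsWithin]
    with t hle (ht : 0 < t)
  calc C * t ^ r = C * t ^ (r - β) * t ^ β := by
        rw [mul_assoc, ← Real.rpow_add ht, sub_add_cancel]
    _ ≤ 1 * t ^ β := by gcongr
    _ = t ^ β := one_mul _

theorem eventually_rpow_le_const_mul_rpow {β r c : ℝ} (h : r < β) (hc : 0 < c) :
    ∀ᶠ t in 𝓝[>] (0 : ℝ), t ^ β ≤ c * t ^ r :=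
  (eventually_const_mul_rpow_le_rpow h c⁻¹).mono fun _ ht => by rwa [inv_mul_le_iff₀ hc] at ht

theorem eventually_le_mul_rpow_of_mem_S0 {M : ℝ → ℝ} (hM : ∀ l ∈ Ioc (0 : ℝ) 1, 0 ≤ M l)
    {t₀ r β : ℝ} (ht₀ : 0 < t₀) (hr : r ∈ S0 M t₀) (hβ : β < r) :
    ∀ᶠ t in 𝓝[>] (0 : ℝ), ∀ l ∈ Ioc (0 : ℝ) 1, M (l * t) ≤ M l * t ^ β := by
  obtain ⟨-, C, hC⟩ := hr
  filter_upwards [eventually_const_mul_rpow_le_rpow hβ C, Ioc_mem_nhdsGT ht₀] with t hCt ht l hl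
  calc M (l * t) ≤ C * (M l * t ^ r) := hC l hl t ht
    _ = M l * (C * t ^ r) := by ring
    _ ≤ M l * t ^ β := mul_le_mul_of_nonneg_left hCt (hM l hl)

theorem eventually_mul_rpow_le_of_mem_S1 {M : ℝ → ℝ} (hM : ∀ l ∈ Ioc (0 : ℝ) 1, 0 ≤ M l)
    {t₀ r β : ℝ} (ht₀ : 0 < t₀) (hr : r ∈ S1 M t₀) (hβ : r < β) :
    ∀ᶠ t in 𝓝[>] (0 : ℝ), ∀ l ∈ Ioc (0 : ℝ) 1, M l * t ^ β ≤ M (l * t) := by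
  obtain ⟨-, c, hc, hcM⟩ := hr
  filter_upwards [eventually_rpow_le_const_mul_rpow hβ hc, Ioc_mem_nhdsGT ht₀] with t hct ht l hl
  calc M l * t ^ β ≤ M l * (c * t ^ r) := mul_le_mul_of_nonneg_left hct (hM l hl)
    _ = c * (M l * t ^ r) := by ring
    _ ≤ M (l * t) := hcM l hl t ht

theorem power_bounds_equivalent_function_general
    (M : ℝ → ℝ) (hM : MemFcal M) (β₀ β₁ : ℝ)
    (hβ₀ : ENNReal.ofReal β₀ < alpha0' M) (hβ₁ : alpha1' M < ENNReal.ofReal β₁) :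
    ∃ (N : ℝ → ℝ) (t₀ : ℝ), MemFcal N ∧ EquivAtZero N M ∧ N 1 = 1 ∧
      0 < t₀ ∧ t₀ ≤ 1 ∧
      (∀ l ∈ Ioc (0 : ℝ) 1, ∀ t ∈ Ioc (0 : ℝ) t₀,
        N l * t ^ β₁ ≤ N (l * t) ∧ N (l * t) ≤ N l * t ^ β₀) ∧
      (ConvexOn ℝ (Ici 0) M → ConvexOn ℝ (Ici 0) N) ∧
      (ConcaveOn ℝ (Ici 0) M → ConcaveOn ℝ (Ici 0) N) := by
  have hM_nonneg : ∀ l ∈ Ioc (0 : ℝ) 1, 0 ≤ M l := fun l hl => hM.nonneg hl.1.le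
  obtain ⟨s₀, hs₀, r₀, hr₀, hβr₀⟩ := exists_mem_S0_of_ofReal_lt_alpha0' hβ₀
  obtain ⟨s₁, hs₁, r₁, hr₁, hr₁β⟩ := exists_mem_S1_of_alpha1'_lt_ofReal hβ₁
  have hbounds : ∀ᶠ t in 𝓝[>] (0 : ℝ), t ≤ 1 ∧ ∀ l ∈ Ioc (0 : ℝ) 1,
      M l * t ^ β₁ ≤ M (l * t) ∧ M (l * t) ≤ M l * t ^ β₀ := by
    filter_upwards [Ioc_mem_nhdsGT zero_lt_one,
      eventually_mul_rpow_le_of_mem_S1 hM_nonneg hs₁ hr₁ hr₁β,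
      eventually_le_mul_rpow_of_mem_S0 hM_nonneg hs₀ hr₀ hβr₀] with t ht hlow hup
    exact ⟨ht.2, fun l hl => ⟨hlow l hl, hup l hl⟩⟩
  obtain ⟨t₀, ht₀, hsub⟩ := mem_nhdsGT_iff_exists_Ioc_subset.1 hbounds
  have ha : 0 < (M 1)⁻¹ := inv_pos.2 hM.pos_one
  refine ⟨fun t => (M 1)⁻¹ * M t, t₀, hM.const_mul ha,
    equivAtZero_const_mul (fun _ => hM.nonneg) ha, inv_mul_cancel₀ hM.pos_one.ne', ht₀,
    (hsub ⟨ht₀, le_rfl⟩).1, fun l hl t ht => ?_, fun h => h.smul ha.le, fun h => h.smul ha.le⟩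
  obtain ⟨hlow, hup⟩ := (hsub ht).2 l hl
  constructor
  · rw [mul_assoc]; exact mul_le_mul_of_nonneg_left hlow ha.le
  · rw [mul_assoc]; exact mul_le_mul_of_nonneg_left hup ha.le

/-- given `β₀ < α₀(M)` and `α₁(M) < β₁`, there are `N ∈ 𝓕` equivalent to
`M` at zero with `N(1)=1` and `t₀ ∈ (0,1]` such that
`N(λ)t^{β₁} ≤ N(λt) ≤ N(λ)t^{β₀}` for `λ ∈ (0,1]`, `t ∈ (0,t₀]`; moreover `N` can be
chosen convex if `M` is convex and concave if `M` is concave. -/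
theorem power_bounds_equivalent_function
    (M : ℝ → ℝ) (hM : MemFcal M) (β₀ β₁ : ℝ) (hβ₀pos : 0 < β₀) (hβ₁pos : 0 < β₁)
    (hβ₀ : ENNReal.ofReal β₀ < alpha0' M) (hβ₁ : alpha1' M < ENNReal.ofReal β₁) :
    ∃ (N : ℝ → ℝ) (t₀ : ℝ), MemFcal N ∧ EquivAtZero N M ∧ N 1 = 1 ∧
      0 < t₀ ∧ t₀ ≤ 1 ∧
      (∀ l ∈ Ioc (0 : ℝ) 1, ∀ t ∈ Ioc (0 : ℝ) t₀,
        N l * t ^ β₁ ≤ N (l * t) ∧ N (l * t) ≤ N l * t ^ β₀) ∧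
      (ConvexOn ℝ (Ici 0) M → ConvexOn ℝ (Ici 0) N) ∧
      (ConcaveOn ℝ (Ici 0) M → ConcaveOn ℝ (Ici 0) N) :=
  power_bounds_equivalent_function_general M hM β₀ β₁ hβ₀ hβ₁
end

section
/- Let t₀, s₀, s₁ ∈ (0,1) with s₀ ≤ s₁. Then there exist a strictly increasing concave C^∞ function f : (0,1] → (0,1] and τ ∈ (0,1) such that: f(1) = 1, f'(1) = s₁, 0 < τ < t₀, f(τ) = τ^{s₀}, and f'(τ) ≤ s₁ τ^{s₁−1}. -/
open Set

lemma family_props (s₁ ω : ℝ) (h0 : 0 < s₁) (hsw : s₁ ≤ ω) (hw1 : ω ≤ 1) :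
    ContDiffOn ℝ (⊤ : ℕ∞) (fun t : ℝ => (1 - s₁ / ω) + (s₁ / ω) * t ^ ω) (Ioc (0 : ℝ) 1) ∧
    StrictMonoOn (fun t : ℝ => (1 - s₁ / ω) + (s₁ / ω) * t ^ ω) (Ioc (0 : ℝ) 1) ∧
    ConcaveOn ℝ (Ioc (0 : ℝ) 1) (fun t : ℝ => (1 - s₁ / ω) + (s₁ / ω) * t ^ ω) ∧
    MapsTo (fun t : ℝ => (1 - s₁ / ω) + (s₁ / ω) * t ^ ω) (Ioc (0 : ℝ) 1) (Ioc (0 : ℝ) 1) ∧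
    (fun t : ℝ => (1 - s₁ / ω) + (s₁ / ω) * t ^ ω) 1 = 1 ∧
    ∀ x : ℝ, 0 < x →
      deriv (fun t : ℝ => (1 - s₁ / ω) + (s₁ / ω) * t ^ ω) x = s₁ * x ^ (ω - 1) := by
  have hω0 : 0 < ω := lt_of_lt_of_le h0 hsw
  have hc0 : 0 < s₁ / ω := div_pos h0 hω0
  have hc1 : s₁ / ω ≤ 1 := (div_le_one hω0).2 hsw
  refine ⟨?_, ?_, ?_, ?_, ?_, ?_⟩
  · intro x hx
    exact (contDiffAt_const.add (contDiffAt_const.mul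
      (Real.contDiffAt_rpow_const_of_ne hx.1.ne'))).contDiffWithinAt
  · intro x hx y _ hxy
    have h1 : x ^ ω < y ^ ω := Real.rpow_lt_rpow hx.1.le hxy hω0
    simp only
    nlinarith
  · have hc : ConcaveOn ℝ (Ioc (0:ℝ) 1) (fun t : ℝ => t ^ ω) :=
      (Real.concaveOn_rpow hω0.le hw1).subset (fun x hx => hx.1.le) (convex_Ioc 0 1)
    have h2 := (hc.smul hc0.le).add_const (1 - s₁ / ω)
    have heq : (fun t : ℝ => (1 - s₁ / ω) + (s₁ / ω) * t ^ ω)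
        = fun t : ℝ => (s₁ / ω) • t ^ ω + (1 - s₁ / ω) := by
      funext t; simp [smul_eq_mul]; ring
    rw [heq]; exact h2
  · intro t ht
    have h1 : 0 < t ^ ω := Real.rpow_pos_of_pos ht.1 ω
    have h2 : t ^ ω ≤ 1 := Real.rpow_le_one ht.1.le ht.2 hω0.le
    constructor
    · simp only; nlinarith
    · simp only; nlinarith
  · simp
  · intro x hx
    have hd : HasDerivAt (fun t : ℝ => (1 - s₁ / ω) + (s₁ / ω) * t ^ ω)
        ((s₁ / ω) * (ω * x ^ (ω - 1))) x :=
      ((Real.hasDerivAt_rpow_const (Or.inl hx.ne')).const_mul (s₁ / ω)).const_add (1 - s₁ / ω)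
    rw [hd.deriv]
    field_simp


/-- for `t₀, s₀, s₁ ∈ (0,1)` with `s₀ ≤ s₁` there exist a strictly
increasing concave `C^∞` function `f : (0,1] → (0,1]` and `τ ∈ (0,1)` with `f(1) = 1`,
`f'(1) = s₁`, `0 < τ < t₀`, `f(τ) = τ^{s₀}`, and `f'(τ) ≤ s₁ τ^{s₁ - 1}`. -/
theorem exists_concave_interpolating_function
    (t₀ s₀ s₁ : ℝ) (ht₀ : t₀ ∈ Ioo (0 : ℝ) 1) (hs₀ : s₀ ∈ Ioo (0 : ℝ) 1)
    (hs₁ : s₁ ∈ Ioo (0 : ℝ) 1) (hs : s₀ ≤ s₁) :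
    ∃ (f : ℝ → ℝ) (τ : ℝ),
      ContDiffOn ℝ (⊤ : ℕ∞) f (Ioc (0 : ℝ) 1) ∧
      StrictMonoOn f (Ioc (0 : ℝ) 1) ∧
      ConcaveOn ℝ (Ioc (0 : ℝ) 1) f ∧
      MapsTo f (Ioc (0 : ℝ) 1) (Ioc (0 : ℝ) 1) ∧
      f 1 = 1 ∧ deriv f 1 = s₁ ∧
      0 < τ ∧ τ < t₀ ∧ f τ = τ ^ s₀ ∧ deriv f τ ≤ s₁ * τ ^ (s₁ - 1) := by
  obtain ⟨ht₀0, ht₀1⟩ := ht₀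
  obtain ⟨hs₀0, hs₀1⟩ := hs₀
  obtain ⟨hs₁0, hs₁1⟩ := hs₁
  set t' : ℝ := t₀ / 2 with ht'def
  have ht'0 : 0 < t' := by positivity
  have ht'1 : t' < 1 := by simp only [ht'def]; linarith
  have ht't₀ : t' < t₀ := by simp only [ht'def]; linarith
  rcases eq_or_lt_of_le hs with rfl | hlt
  · -- case s₀ = s₁
    obtain ⟨h1, h2, h3, h4, h5, h6⟩ := family_props s₀ s₀ hs₀0 le_rfl hs₀1.le
    refine ⟨_, t', h1, h2, h3, h4, h5, ?_, ht'0, ht't₀, ?_, ?_⟩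
    · rw [h6 1 one_pos]; simp
    · show (1 - s₀ / s₀) + (s₀ / s₀) * t' ^ s₀ = t' ^ s₀
      rw [div_self hs₀0.ne']
      ring
    · rw [h6 t' ht'0]
  · -- case s₀ < s₁ : choose ω ∈ (s₁, 1] near s₁ with f(t') < t'^s₀
    have hGcont : ContinuousAt (fun ω : ℝ => (1 - s₁ / ω) + (s₁ / ω) * t' ^ ω) s₁ := by
      have hdiv : ContinuousAt (fun ω : ℝ => s₁ / ω) s₁ :=
        continuousAt_const.div continuousAt_id hs₁0.ne'
      have hrp : ContinuousAt (fun ω : ℝ => t' ^ ω) s₁ :=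
        continuousAt_const.rpow continuousAt_id (Or.inl ht'0.ne')
      exact (continuousAt_const.sub hdiv).add (hdiv.mul hrp)
    have hGval : (1 - s₁ / s₁) + (s₁ / s₁) * t' ^ s₁ < t' ^ s₀ := by
      rw [div_self hs₁0.ne']
      have := Real.rpow_lt_rpow_of_exponent_gt ht'0 ht'1 hlt
      linarith
    have hev : ∀ᶠ ω in nhds s₁,
        (1 - s₁ / ω) + (s₁ / ω) * t' ^ ω < t' ^ s₀ :=
      hGcont.eventually_lt continuousAt_const hGval
    obtain ⟨ε, hε0, hεball⟩ := Metric.eventually_nhds_iff.1 hev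
    set ω : ℝ := min ((s₁ + 1) / 2) (s₁ + ε / 2) with hωdef
    have hωs₁ : s₁ < ω := lt_min (by linarith) (by linarith)
    have hω1 : ω ≤ 1 := le_trans (min_le_left _ _) (by linarith)
    have hω0 : 0 < ω := lt_trans hs₁0 hωs₁
    have hωnear : dist ω s₁ < ε := by
      rw [Real.dist_eq, abs_of_pos (by linarith)]
      have : ω ≤ s₁ + ε / 2 := min_le_right _ _
      linarith
    have hωprop : (1 - s₁ / ω) + (s₁ / ω) * t' ^ ω < t' ^ s₀ := hεball hωnear
    set c : ℝ := s₁ / ω with hcdef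
    have hc0 : 0 < c := div_pos hs₁0 hω0
    have hc1 : c < 1 := (div_lt_one hω0).2 hωs₁
    obtain ⟨h1, h2, h3, h4, h5, h6⟩ := family_props s₁ ω hs₁0 hωs₁.le hω1
    -- find τ by IVT on [a, t']
    set a : ℝ := min (t' / 2) ((1 - c) ^ (1 / s₀) / 2) with hadef
    have h1c : (0:ℝ) < 1 - c := by linarith
    have ha0 : 0 < a := lt_min (by positivity) (by positivity)
    have hat' : a < t' := lt_of_le_of_lt (min_le_left _ _) (by linarith)
    have hga : a ^ s₀ < 1 - c := by
      have ha2 : a < (1 - c) ^ (1 / s₀) := by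
        refine lt_of_le_of_lt (min_le_right _ _) ?_
        have : (0:ℝ) < (1 - c) ^ (1 / s₀) := Real.rpow_pos_of_pos h1c _
        linarith
      calc a ^ s₀ < ((1 - c) ^ (1 / s₀)) ^ s₀ := Real.rpow_lt_rpow ha0.le ha2 hs₀0
        _ = 1 - c := by
            rw [← Real.rpow_mul h1c.le, one_div_mul_cancel hs₀0.ne', Real.rpow_one]
    -- values of g = f - (·^s₀) at the endpoints
    have hgapos : (0:ℝ) < ((1 - c) + c * a ^ ω) - a ^ s₀ := by
      have : 0 < a ^ ω := Real.rpow_pos_of_pos ha0 ω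
      nlinarith
    have hgt'neg : ((1 - c) + c * t' ^ ω) - t' ^ s₀ < 0 := by
      have := hωprop
      simp only [hcdef]
      linarith
    have hIcc : Icc a t' ⊆ Ioc (0:ℝ) 1 := fun x hx => ⟨lt_of_lt_of_le ha0 hx.1,
      le_trans hx.2 ht'1.le⟩
    have hgcont : ContinuousOn
        (fun t : ℝ => ((1 - c) + c * t ^ ω) - t ^ s₀) (Icc a t') := by
      refine ContinuousOn.sub ?_ ?_
      · exact ((h1.continuousOn).mono hIcc)
      · exact fun x _ => (Real.continuousAt_rpow_const x s₀ (Or.inr hs₀0.le)).continuousWithinAt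
    have hmem : (0:ℝ) ∈ Ioo (((1 - c) + c * t' ^ ω) - t' ^ s₀)
        (((1 - c) + c * a ^ ω) - a ^ s₀) := ⟨hgt'neg, hgapos⟩
    obtain ⟨τ, hτmem, hτeq⟩ := intermediate_value_Ioo' hat'.le hgcont hmem
    have hτ0 : 0 < τ := lt_trans ha0 hτmem.1
    have hτt' : τ < t' := hτmem.2
    have hτ1 : τ ≤ 1 := le_of_lt (lt_trans hτt' ht'1)
    refine ⟨_, τ, h1, h2, h3, h4, h5, ?_, hτ0, lt_trans hτt' ht't₀, ?_, ?_⟩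
    · rw [h6 1 one_pos]; simp
    · have : ((1 - c) + c * τ ^ ω) - τ ^ s₀ = 0 := hτeq
      simp only [hcdef] at this ⊢
      linarith
    · rw [h6 τ hτ0]
      have : τ ^ (ω - 1) ≤ τ ^ (s₁ - 1) :=
        Real.rpow_le_rpow_of_exponent_ge hτ0 hτ1 (by linarith)
      nlinarith
end

section
/- Let ψ₀, ψ₁ : [0,∞) → [0,∞) be concave continuous strictly increasing bijections and let θ ∈ (0,1). Then the function ψ_θ(t) = ψ₀(t)^{1−θ} ψ₁(t)^θ is also a concave continuous strictly increasing bijection from [0,∞) to [0,∞). -/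
/-!
Concavity comes from Hölder's inequality for two-term sums,
`a^(1-θ) c^θ + b^(1-θ) d^θ ≤ (a + b)^(1-θ) (c + d)^θ`: together with homogeneity it makes
`(u, v) ↦ u^(1-θ) v^θ` concave and monotone on the nonnegative quadrant, so it preserves the
concavity of `(ψ₀, ψ₁)`. For surjectivity, `ψ_θ ≥ min ψ₀ ψ₁ → ∞`, and `ψ_θ(0) = 0`, so the
intermediate value theorem applies.
-/

open Set Filter

namespace Real

variable {θ : ℝ}

theorem rpow_one_sub_mul_rpow_add_le (hθ : θ ∈ Ioo (0 : ℝ) 1) {a b c d : ℝ}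
    (ha : 0 ≤ a) (hb : 0 ≤ b) (hc : 0 ≤ c) (hd : 0 ≤ d) :
    a ^ (1 - θ) * c ^ θ + b ^ (1 - θ) * d ^ θ ≤ (a + b) ^ (1 - θ) * (c + d) ^ θ := by
  have hθ₁ : 1 - θ ≠ 0 := by linarith [hθ.2]
  have hpq : (1 / (1 - θ)).HolderConjugate (1 / θ) :=
    holderConjugate_one_div (by linarith [hθ.2]) hθ.1 (by ring)
  have holder := inner_le_Lp_mul_Lq_of_nonneg Finset.univ hpq
    (f := ![a ^ (1 - θ), b ^ (1 - θ)]) (g := ![c ^ θ, d ^ θ])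
    (by simp [Fin.forall_fin_two, rpow_nonneg, ha, hb])
    (by simp [Fin.forall_fin_two, rpow_nonneg, hc, hd])
  simpa [Fin.sum_univ_two, rpow_rpow_inv, ha, hb, hc, hd, hθ₁, hθ.1.ne'] using holder

theorem mul_rpow_one_sub_mul_mul_rpow {l a c : ℝ} (hl : 0 ≤ l) (ha : 0 ≤ a) (hc : 0 ≤ c) :
    (l * a) ^ (1 - θ) * (l * c) ^ θ = l * (a ^ (1 - θ) * c ^ θ) := by
  have hl_pow : l ^ (1 - θ) * l ^ θ = l := by
    rw [← rpow_add' hl (by norm_num), sub_add_cancel, rpow_one]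
  rw [mul_rpow hl ha, mul_rpow hl hc]
  linear_combination (a ^ (1 - θ) * c ^ θ) * hl_pow

theorem min_le_rpow_one_sub_mul_rpow (hθ : θ ∈ Icc (0 : ℝ) 1) {a c : ℝ}
    (ha : 0 ≤ a) (hc : 0 ≤ c) : min a c ≤ a ^ (1 - θ) * c ^ θ := by
  have hθ₀ : 0 ≤ θ := hθ.1
  have hθ₁ : 0 ≤ 1 - θ := by linarith [hθ.2]
  have hm : 0 ≤ min a c := le_min ha hc
  calc min a c = min a c ^ (1 - θ) * min a c ^ θ := by
        rw [← rpow_add' hm (by norm_num), sub_add_cancel, rpow_one]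
    _ ≤ a ^ (1 - θ) * c ^ θ := by
        gcongr
        exacts [min_le_left a c, min_le_right a c]

end Real

theorem ConcaveOn.rpow_one_sub_mul_rpow {E : Type*} [AddCommGroup E] [Module ℝ E] {s : Set E}
    {f g : E → ℝ} {θ : ℝ} (hθ : θ ∈ Ioo (0 : ℝ) 1) (hf : ConcaveOn ℝ s f) (hg : ConcaveOn ℝ s g)
    (hf₀ : ∀ x ∈ s, 0 ≤ f x) (hg₀ : ∀ x ∈ s, 0 ≤ g x) :
    ConcaveOn ℝ s (fun x => f x ^ (1 - θ) * g x ^ θ) := by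
  refine ⟨hf.1, fun x hx y hy l m hl hm hlm => ?_⟩
  have hθ₀ : 0 ≤ θ := hθ.1.le
  have hθ₁ : 0 ≤ 1 - θ := by linarith [hθ.2]
  have hfx := hf₀ x hx
  have hfy := hf₀ y hy
  have hgx := hg₀ x hx
  have hgy := hg₀ y hy
  simp only [smul_eq_mul]
  calc l * (f x ^ (1 - θ) * g x ^ θ) + m * (f y ^ (1 - θ) * g y ^ θ)
      = (l * f x) ^ (1 - θ) * (l * g x) ^ θ + (m * f y) ^ (1 - θ) * (m * g y) ^ θ := by
        rw [Real.mul_rpow_one_sub_mul_mul_rpow hl hfx hgx,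
          Real.mul_rpow_one_sub_mul_mul_rpow hm hfy hgy]
    _ ≤ (l * f x + m * f y) ^ (1 - θ) * (l * g x + m * g y) ^ θ :=
        Real.rpow_one_sub_mul_rpow_add_le hθ (by positivity) (by positivity) (by positivity)
          (by positivity)
    _ ≤ f (l • x + m • y) ^ (1 - θ) * g (l • x + m • y) ^ θ := by
        have hf' := hf.2 hx hy hl hm hlm
        have hg' := hg.2 hx hy hl hm hlm
        have hfz := Real.rpow_nonneg (hf₀ _ (hf.1 hx hy hl hm hlm)) (1 - θ)
        simp only [smul_eq_mul] at hf' hg'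
        gcongr

section MonotoneOnIci

variable {α β : Type*} {f : α → β} {a : α} {b : β}

theorem MonotoneOn.map_eq_of_surjOn_Ici [Preorder α] [PartialOrder β]
    (hf : MonotoneOn f (Ici a)) (hmaps : MapsTo f (Ici a) (Ici b))
    (hsurj : SurjOn f (Ici a) (Ici b)) : f a = b := by
  obtain ⟨t, ht, hft⟩ := hsurj (self_mem_Ici : b ∈ Ici b)
  exact le_antisymm (hft ▸ hf self_mem_Ici ht ht) (hmaps self_mem_Ici)

theorem MonotoneOn.tendsto_atTop_of_surjOn_Ici [SemilatticeSup α] [Nonempty α] [LinearOrder β]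
    (hf : MonotoneOn f (Ici a)) (hsurj : SurjOn f (Ici a) (Ici b)) :
    Tendsto f atTop atTop := by
  refine tendsto_atTop_atTop.2 fun y => ?_
  obtain ⟨t, ht, hft⟩ := hsurj (le_max_right y b : b ≤ max y b)
  refine ⟨t, fun s hts => ?_⟩
  calc y ≤ max y b := le_max_left y b
    _ = f t := hft.symm
    _ ≤ f s := hf ht (le_trans ht hts) hts

end MonotoneOnIci

/-- Calderón: the geometric mean `ψ_θ = ψ₀^{1-θ} ψ₁^θ` of two concave
continuous strictly increasing bijections of `[0,∞)` is again a concave continuous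
strictly increasing bijection of `[0,∞)`. -/
theorem geometric_mean_concave_bijection
    (ψ₀ ψ₁ : ℝ → ℝ) (θ : ℝ) (hθ : θ ∈ Ioo (0 : ℝ) 1)
    (h₀c : ContinuousOn ψ₀ (Ici 0)) (h₀m : StrictMonoOn ψ₀ (Ici 0))
    (h₀b : BijOn ψ₀ (Ici 0) (Ici 0)) (h₀cc : ConcaveOn ℝ (Ici 0) ψ₀)
    (h₁c : ContinuousOn ψ₁ (Ici 0)) (h₁m : StrictMonoOn ψ₁ (Ici 0))
    (h₁b : BijOn ψ₁ (Ici 0) (Ici 0)) (h₁cc : ConcaveOn ℝ (Ici 0) ψ₁) :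
    ContinuousOn (fun t => ψ₀ t ^ (1 - θ) * ψ₁ t ^ θ) (Ici 0) ∧
    StrictMonoOn (fun t => ψ₀ t ^ (1 - θ) * ψ₁ t ^ θ) (Ici 0) ∧
    BijOn (fun t => ψ₀ t ^ (1 - θ) * ψ₁ t ^ θ) (Ici 0) (Ici 0) ∧
    ConcaveOn ℝ (Ici 0) (fun t => ψ₀ t ^ (1 - θ) * ψ₁ t ^ θ) := by
  obtain ⟨hθ₀, hθ₁⟩ := hθ
  have hθ₁' : 0 < 1 - θ := sub_pos.2 hθ₁
  have h₀n : ∀ t ∈ Ici (0 : ℝ), 0 ≤ ψ₀ t := fun t ht => h₀b.mapsTo ht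
  have h₁n : ∀ t ∈ Ici (0 : ℝ), 0 ≤ ψ₁ t := fun t ht => h₁b.mapsTo ht
  have hcont : ContinuousOn (fun t => ψ₀ t ^ (1 - θ) * ψ₁ t ^ θ) (Ici 0) :=
    (h₀c.rpow_const fun _ _ => Or.inr hθ₁'.le).mul (h₁c.rpow_const fun _ _ => Or.inr hθ₀.le)
  have hmono : StrictMonoOn (fun t => ψ₀ t ^ (1 - θ) * ψ₁ t ^ θ) (Ici 0) :=
    fun s hs t ht hst => mul_lt_mul'' (Real.rpow_lt_rpow (h₀n s hs) (h₀m hs ht hst) hθ₁')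
      (Real.rpow_lt_rpow (h₁n s hs) (h₁m hs ht hst) hθ₀) (Real.rpow_nonneg (h₀n s hs) _)
      (Real.rpow_nonneg (h₁n s hs) _)
  have hzero : ψ₀ 0 ^ (1 - θ) * ψ₁ 0 ^ θ = 0 := by
    rw [h₀m.monotoneOn.map_eq_of_surjOn_Ici h₀b.mapsTo h₀b.surjOn, Real.zero_rpow hθ₁'.ne',
      zero_mul]
  have htop : Tendsto (fun t => ψ₀ t ^ (1 - θ) * ψ₁ t ^ θ) atTop atTop :=
    tendsto_atTop_mono' _
      ((eventually_ge_atTop 0).mono fun t ht =>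
        Real.min_le_rpow_one_sub_mul_rpow ⟨hθ₀.le, hθ₁.le⟩ (h₀n t ht) (h₁n t ht))
      (tendsto_inf_atTop _ (h₀m.monotoneOn.tendsto_atTop_of_surjOn_Ici h₀b.surjOn)
        (h₁m.monotoneOn.tendsto_atTop_of_surjOn_Ici h₁b.surjOn))
  refine ⟨hcont, hmono, ⟨fun t ht => ?_, hmono.injOn, ?_⟩,
    h₀cc.rpow_one_sub_mul_rpow ⟨hθ₀, hθ₁⟩ h₁cc h₀n h₁n⟩
  · exact mul_nonneg (Real.rpow_nonneg (h₀n t ht) _) (Real.rpow_nonneg (h₁n t ht) _)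
  · have hsurj := intermediate_value_Ici hcont htop
    rwa [hzero] at hsurj
end
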